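/- arXiv:2605.05181 — 8 statements merged into one kernel-verified Lean document; each statement's English description precedes it below -/
import Mathlib

section
/- If an Abelian group Γ of order n² has exactly one involution, then there does not exist an n×n array whose entries are pairwise distinct elements of Γ (hence a bijection with Γ) such that every row sum, every column sum, the main diagonal sum, and the main antidiagonal sum all equal 0. -/
open Finset

/-- A zero-sum `Γ`-magic square of side `n`: an `n × n` array filled bijectively with the
elements of `Γ` such that all row sums, column sums, the main diagonal sum and the main
antidiagonal sum equal `0`. -/
def IsZeroSumMagicSquare {Γ : Type*} [AddCommGroup Γ] {n : ℕ}
    (A : Fin n → Fin n → Γ) : Prop :=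
  Function.Bijective (fun p : Fin n × Fin n => A p.1 p.2) ∧
  (∀ i, ∑ j, A i j = 0) ∧
  (∀ j, ∑ i, A i j = 0) ∧
  (∑ i, A i i = 0) ∧
  (∑ i, A i i.rev = 0)

theorem no_zero_sum_magic_square_of_unique_involution {Γ : Type*} [AddCommGroup Γ] [Fintype Γ]
    (n : ℕ) (hcard : Fintype.card Γ = n ^ 2)
    (ι : Γ) (hι : ι ≠ 0 ∧ 2 • ι = 0)
    (huniq : ∀ x : Γ, x ≠ 0 → 2 • x = 0 → x = ι) :
    ¬ ∃ A : Fin n → Fin n → Γ, IsZeroSumMagicSquare A := by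
  classical
  obtain ⟨hι0, hι2⟩ := hι
  have hιι : -ι = ι := by
    have h : ι + ι = 0 := by simpa [two_smul] using hι2
    exact neg_eq_of_add_eq_zero_left h
  rintro ⟨A, hbij, hrow, -, -, -⟩
  -- the sum over `univ.erase ι` is 0, pairing each element with its negative
  have herase : ∑ x ∈ Finset.univ.erase ι, x = 0 := by
    apply Finset.sum_involution (fun a _ => -a)
    · intro a _; simp
    · intro a ha hne h
      have h2 : 2 • a = 0 := by
        have : a + a = 0 := by
          have := congrArg (· + a) h
          simpa using this.symm
        simpa [two_smul] using this
      have haι : a = ι := huniq a hne h2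
      exact (Finset.mem_erase.mp ha).1 haι
    · intro a _; simp
    · intro a ha
      simp only [Finset.mem_erase, Finset.mem_univ, and_true] at ha ⊢
      intro h
      apply ha
      rw [← hιι] at h
      exact neg_injective h
  have htot : ∑ x : Γ, x = ι := by
    rw [show (Finset.univ : Finset Γ) = insert ι (Finset.univ.erase ι) by
        simp [Finset.insert_erase (Finset.mem_univ ι)],
      Finset.sum_insert (Finset.notMem_erase ι _), herase, add_zero]
  -- but the sum of all entries is 0
  have hzero : ∑ p : Fin n × Fin n, A p.1 p.2 = 0 := by
    rw [Fintype.sum_prod_type]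
    simp [hrow]
  have hsum : ∑ p : Fin n × Fin n, A p.1 p.2 = ∑ x : Γ, id x :=
    Fintype.sum_bijective _ hbij (fun p => A p.1 p.2) id (fun _ => rfl)
  simp only [id] at hsum
  rw [hzero, htot] at hsum
  exact hι0 hsum.symm
end

section
/- For every odd integer n ≥ 3, there exists a zero-sum Z_{n²}-magic square of side n; that is, an n×n array filled bijectively with the elements of Z_{n²} such that all row sums, all column sums, and both main diagonal sums equal 0. -/
open Finset

section AuxMagic

variable {n : ℕ} [NeZero n]

private lemma castFin_bijective : Function.Bijective (fun i : Fin n => ((i : ℕ) : ZMod n)) := by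
  rw [Fintype.bijective_iff_injective_and_card]
  refine ⟨fun i j h => ?_, by simp [ZMod.card]⟩
  simp only [] at h
  have h2 : ((i : ℕ) : ZMod n).val = ((j : ℕ) : ZMod n).val := by rw [h]
  rw [ZMod.val_cast_of_lt i.isLt, ZMod.val_cast_of_lt j.isLt] at h2
  exact Fin.ext h2

private lemma affine_bijective (u v : ZMod n) (hu : IsUnit u) :
    Function.Bijective (fun j : Fin n => v + u * ((j : ℕ) : ZMod n)) := by
  have h1 : Function.Bijective (fun x : ZMod n => v + u * x) :=
    (Equiv.addLeft v).bijective.comp (IsUnit.isUnit_iff_mulLeft_bijective.mp hu)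
  exact h1.comp castFin_bijective

private lemma affine_sum {M : Type*} [AddCommMonoid M] (f : ZMod n → M) (u v : ZMod n)
    (hu : IsUnit u) :
    ∑ j : Fin n, f (v + u * ((j : ℕ) : ZMod n)) = ∑ x : ZMod n, f x :=
  Fintype.sum_bijective _ (affine_bijective u v hu) _ f (fun _ => rfl)

private lemma affine_sum' {M : Type*} [AddCommMonoid M] (f : ZMod n → M) (u v : ZMod n)
    (hu : IsUnit u) (g : Fin n → ZMod n) (hg : ∀ j, g j = v + u * ((j : ℕ) : ZMod n)) :
    ∑ j : Fin n, f (g j) = ∑ x : ZMod n, f x := by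
  rw [Finset.sum_congr rfl (fun j _ => by rw [hg j])]
  exact affine_sum f u v hu

private def packFn (n : ℕ) : ZMod n × ZMod n → ZMod (n ^ 2) :=
  fun q => ((n * q.1.val + q.2.val : ℕ) : ZMod (n ^ 2))

private def linFn (n k : ℕ) : Fin n × Fin n → ZMod n × ZMod n :=
  fun p => (((p.1 : ℕ) : ZMod n) + ((p.2 : ℕ) : ZMod n),
    ((p.1 : ℕ) : ZMod n) - ((p.2 : ℕ) : ZMod n) + ((k : ℕ) : ZMod n))

private lemma packFn_bijective (n : ℕ) [NeZero n] : Function.Bijective (packFn n) := by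
  haveI : NeZero (n ^ 2) := ⟨pow_ne_zero 2 (NeZero.ne n)⟩
  rw [Fintype.bijective_iff_injective_and_card]
  constructor
  · intro q q' h
    have hn : 0 < n := Nat.pos_of_ne_zero (NeZero.ne n)
    have l1 : n * q.1.val + q.2.val < n ^ 2 := by
      have a1 : n * (q.1.val + 1) ≤ n * n := Nat.mul_le_mul_left n (ZMod.val_lt q.1)
      have a2 := ZMod.val_lt q.2
      rw [Nat.mul_succ] at a1
      rw [pow_two]
      omega
    have l2 : n * q'.1.val + q'.2.val < n ^ 2 := by
      have a1 : n * (q'.1.val + 1) ≤ n * n := Nat.mul_le_mul_left n (ZMod.val_lt q'.1)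
      have a2 := ZMod.val_lt q'.2
      rw [Nat.mul_succ] at a1
      rw [pow_two]
      omega
    have heq : n * q.1.val + q.2.val = n * q'.1.val + q'.2.val := by
      have hv := congrArg ZMod.val h
      simpa only [packFn, ZMod.val_cast_of_lt l1, ZMod.val_cast_of_lt l2] using hv
    have e2 : q.2.val = q'.2.val := by
      have m1 : (n * q.1.val + q.2.val) % n = q.2.val := by
        rw [Nat.mul_add_mod]; exact Nat.mod_eq_of_lt (ZMod.val_lt q.2)
      have m2 : (n * q'.1.val + q'.2.val) % n = q'.2.val := by
        rw [Nat.mul_add_mod]; exact Nat.mod_eq_of_lt (ZMod.val_lt q'.2)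
      rw [← m1, ← m2, heq]
    have e1 : q.1.val = q'.1.val := by
      have : n * q.1.val = n * q'.1.val := by omega
      exact Nat.eq_of_mul_eq_mul_left hn this
    exact Prod.ext (ZMod.val_injective n e1) (ZMod.val_injective n e2)
  · simp [ZMod.card, pow_two]

private lemma linFn_bijective (n k : ℕ) [NeZero n] (hu2 : IsUnit (2 : ZMod n)) :
    Function.Bijective (linFn n k) := by
  rw [Fintype.bijective_iff_injective_and_card]
  refine ⟨fun p p' h => ?_, by simp [ZMod.card]⟩
  simp only [linFn, Prod.mk.injEq] at h
  obtain ⟨h1, h2⟩ := h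
  have hi : (2 : ZMod n) * ((p.1 : ℕ) : ZMod n) = 2 * ((p'.1 : ℕ) : ZMod n) := by
    linear_combination h1 + h2
  have hj : (2 : ZMod n) * ((p.2 : ℕ) : ZMod n) = 2 * ((p'.2 : ℕ) : ZMod n) := by
    linear_combination h1 - h2
  have e1 : p.1 = p'.1 := castFin_bijective.injective (hu2.mul_left_cancel hi)
  have e2 : p.2 = p'.2 := castFin_bijective.injective (hu2.mul_left_cancel hj)
  exact Prod.ext e1 e2

end AuxMagic

theorem exists_zero_sum_magic_square_zmod_sq (n : ℕ) (hn : 3 ≤ n) (hodd : Odd n) :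
    ∃ A : Fin n → Fin n → ZMod (n ^ 2), IsZeroSumMagicSquare A := by
  obtain ⟨k, hk⟩ := hodd
  haveI : NeZero n := ⟨by omega⟩
  haveI : NeZero (n ^ 2) := ⟨by positivity⟩
  have hu2 : IsUnit (2 : ZMod n) := by
    have h2 : ((2 : ℕ) : ZMod n) = 2 := by push_cast; ring
    rw [← h2, ZMod.isUnit_iff_coprime]
    exact Nat.coprime_two_left.mpr ⟨k, hk⟩
  have hun1 : IsUnit (-1 : ZMod n) := isUnit_one.neg
  -- the sum of all values
  set S : ZMod (n ^ 2) := ((n * k : ℕ) : ZMod (n ^ 2)) with hSdef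
  set c : ZMod (n ^ 2) := ((k : ℕ) : ZMod (n ^ 2)) with hcdef
  have hS : ∑ x : ZMod n, ((x.val : ℕ) : ZMod (n ^ 2)) = S := by
    have h1 : ∑ j : Fin n, (((((j : ℕ) : ZMod n)).val : ℕ) : ZMod (n ^ 2)) =
        ∑ x : ZMod n, ((x.val : ℕ) : ZMod (n ^ 2)) :=
      Fintype.sum_bijective _ castFin_bijective _ _ (fun _ => rfl)
    rw [← h1]
    have h2 : ∀ j : Fin n, (((((j : ℕ) : ZMod n)).val : ℕ) : ZMod (n ^ 2)) =
        (((j : ℕ) : ℕ) : ZMod (n ^ 2)) := by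
      intro j; rw [ZMod.val_cast_of_lt j.isLt]
    rw [Finset.sum_congr rfl (fun j _ => h2 j), ← Nat.cast_sum,
      Fin.sum_univ_eq_sum_range (fun i => i) n]
    have h3 : ∑ i ∈ range n, i = n * k := by
      have h4 := Finset.sum_range_id_mul_two n
      have h5 : n * (n - 1) = n * k * 2 := by
        have h6 : n - 1 = 2 * k := by omega
        rw [h6]; ring
      omega
    rw [h3]
  have hnS : (n : ZMod (n ^ 2)) * S = 0 := by
    rw [hSdef]
    have h7 : (n : ZMod (n ^ 2)) * ((n * k : ℕ) : ZMod (n ^ 2)) =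
        ((n ^ 2 : ℕ) : ZMod (n ^ 2)) * ((k : ℕ) : ZMod (n ^ 2)) := by
      push_cast; ring
    rw [h7, ZMod.natCast_self, zero_mul]
  have hSc : S = (n : ZMod (n ^ 2)) * c := by
    rw [hSdef, hcdef]; push_cast; ring
  refine ⟨fun i j => packFn n (linFn n k (i, j)) - c, ?_, ?_, ?_, ?_, ?_⟩
  · -- bijectivity
    have hcomp : (fun p : Fin n × Fin n => packFn n (linFn n k (p.1, p.2)) - c) =
        (fun z : ZMod (n ^ 2) => z - c) ∘ packFn n ∘ linFn n k := rfl
    rw [hcomp]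
    exact (Equiv.subRight c).bijective.comp ((packFn_bijective n).comp (linFn_bijective n k hu2))
  · -- rows
    intro i
    simp only [packFn, linFn, Nat.cast_add, Nat.cast_mul]
    rw [Finset.sum_sub_distrib, Finset.sum_add_distrib, ← Finset.mul_sum]
    have ha : ∑ j : Fin n, (((((i : ℕ) : ZMod n) + ((j : ℕ) : ZMod n)).val : ℕ) : ZMod (n ^ 2))
        = S := by
      rw [affine_sum' (fun x : ZMod n => ((x.val : ℕ) : ZMod (n ^ 2))) 1 ((i : ℕ) : ZMod n)
        isUnit_one _ (fun j => by ring), hS]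
    have hb : ∑ j : Fin n,
        (((((i : ℕ) : ZMod n) - ((j : ℕ) : ZMod n) + ((k : ℕ) : ZMod n)).val : ℕ) : ZMod (n ^ 2))
        = S := by
      rw [affine_sum' (fun x : ZMod n => ((x.val : ℕ) : ZMod (n ^ 2))) (-1)
        (((i : ℕ) : ZMod n) + ((k : ℕ) : ZMod n)) hun1 _ (fun j => by ring), hS]
    rw [ha, hb, Finset.sum_const, card_univ, Fintype.card_fin, nsmul_eq_mul, hnS, hSc]
    ring
  · -- columns
    intro j
    simp only [packFn, linFn, Nat.cast_add, Nat.cast_mul]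
    rw [Finset.sum_sub_distrib, Finset.sum_add_distrib, ← Finset.mul_sum]
    have ha : ∑ i : Fin n, (((((i : ℕ) : ZMod n) + ((j : ℕ) : ZMod n)).val : ℕ) : ZMod (n ^ 2))
        = S := by
      rw [affine_sum' (fun x : ZMod n => ((x.val : ℕ) : ZMod (n ^ 2))) 1 ((j : ℕ) : ZMod n)
        isUnit_one _ (fun i => by ring), hS]
    have hb : ∑ i : Fin n,
        (((((i : ℕ) : ZMod n) - ((j : ℕ) : ZMod n) + ((k : ℕ) : ZMod n)).val : ℕ) : ZMod (n ^ 2))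
        = S := by
      rw [affine_sum' (fun x : ZMod n => ((x.val : ℕ) : ZMod (n ^ 2))) 1
        (((k : ℕ) : ZMod n) - ((j : ℕ) : ZMod n)) isUnit_one _ (fun i => by ring), hS]
    rw [ha, hb, Finset.sum_const, card_univ, Fintype.card_fin, nsmul_eq_mul, hnS, hSc]
    ring
  · -- main diagonal
    simp only [packFn, linFn, Nat.cast_add, Nat.cast_mul]
    rw [Finset.sum_sub_distrib, Finset.sum_add_distrib, ← Finset.mul_sum]
    have ha : ∑ i : Fin n, (((((i : ℕ) : ZMod n) + ((i : ℕ) : ZMod n)).val : ℕ) : ZMod (n ^ 2))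
        = S := by
      rw [affine_sum' (fun x : ZMod n => ((x.val : ℕ) : ZMod (n ^ 2))) 2 0
        hu2 _ (fun i => by ring), hS]
    have hb : ∑ i : Fin n,
        (((((i : ℕ) : ZMod n) - ((i : ℕ) : ZMod n) + ((k : ℕ) : ZMod n)).val : ℕ) : ZMod (n ^ 2))
        = (n : ℕ) • c := by
      have hbv : ∀ i : Fin n,
          (((((i : ℕ) : ZMod n) - ((i : ℕ) : ZMod n) + ((k : ℕ) : ZMod n)).val : ℕ) : ZMod (n ^ 2))
          = c := by
        intro i
        have : ((i : ℕ) : ZMod n) - ((i : ℕ) : ZMod n) + ((k : ℕ) : ZMod n) = ((k : ℕ) : ZMod n) := by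
          ring
        rw [this, ZMod.val_cast_of_lt (by omega : k < n), hcdef]
      rw [Finset.sum_congr rfl (fun i _ => hbv i), Finset.sum_const, card_univ, Fintype.card_fin]
    rw [ha, hb, Finset.sum_const, card_univ, Fintype.card_fin, hnS, nsmul_eq_mul]
    ring
  · -- antidiagonal
    simp only [packFn, linFn, Nat.cast_add, Nat.cast_mul]
    rw [Finset.sum_sub_distrib, Finset.sum_add_distrib, ← Finset.mul_sum]
    have hrev : ∀ i : Fin n, ((i.rev : ℕ) : ZMod n) = ((n - 1 : ℕ) : ZMod n) - ((i : ℕ) : ZMod n) := by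
      intro i
      have hv : (i.rev : ℕ) = n - 1 - (i : ℕ) := by
        rw [Fin.val_rev]; omega
      rw [hv, Nat.cast_sub (by have := i.isLt; omega : (i : ℕ) ≤ n - 1)]
    have ha : ∑ i : Fin n, (((((i : ℕ) : ZMod n) + ((i.rev : ℕ) : ZMod n)).val : ℕ) : ZMod (n ^ 2))
        = (n : ℕ) • (((n - 1 : ℕ) : ℕ) : ZMod (n ^ 2)) := by
      have hav : ∀ i : Fin n,
          (((((i : ℕ) : ZMod n) + ((i.rev : ℕ) : ZMod n)).val : ℕ) : ZMod (n ^ 2))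
          = (((n - 1 : ℕ) : ℕ) : ZMod (n ^ 2)) := by
        intro i
        have h8 : ((i : ℕ) : ZMod n) + ((i.rev : ℕ) : ZMod n) = ((n - 1 : ℕ) : ZMod n) := by
          rw [hrev i]; ring
        rw [h8, ZMod.val_cast_of_lt (by omega : n - 1 < n)]
      rw [Finset.sum_congr rfl (fun i _ => hav i), Finset.sum_const, card_univ, Fintype.card_fin]
    have hb : ∑ i : Fin n,
        (((((i : ℕ) : ZMod n) - ((i.rev : ℕ) : ZMod n) + ((k : ℕ) : ZMod n)).val : ℕ) : ZMod (n ^ 2))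
        = S := by
      rw [affine_sum' (fun x : ZMod n => ((x.val : ℕ) : ZMod (n ^ 2))) 2
        (((k : ℕ) : ZMod n) - ((n - 1 : ℕ) : ZMod n)) hu2 _ (fun i => by rw [hrev i]; ring), hS]
    rw [ha, hb, Finset.sum_const, card_univ, Fintype.card_fin, nsmul_eq_mul, nsmul_eq_mul]
    have h9 : (n : ZMod (n ^ 2)) * ((n : ZMod (n ^ 2)) * (((n - 1 : ℕ) : ℕ) : ZMod (n ^ 2))) = 0 := by
      have h10 : (n : ZMod (n ^ 2)) * ((n : ZMod (n ^ 2)) * (((n - 1 : ℕ) : ℕ) : ZMod (n ^ 2))) =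
          ((n ^ 2 : ℕ) : ZMod (n ^ 2)) * (((n - 1 : ℕ) : ℕ) : ZMod (n ^ 2)) := by
        push_cast; ring
      rw [h10, ZMod.natCast_self, zero_mul]
    rw [h9, hSc]
    ring
end

section
/- For every odd integer n ≥ 3 and every Abelian group Γ of order n², there exists a zero-sum Γ-magic square of side n. -/
open Finset

/-- In a finite additive group of odd order, `x + x = 0` implies `x = 0`. -/
lemma MagicAux.eq_zero_of_self_add_self {G : Type*} [AddGroup G] [Finite G]
    (hodd : Odd (Nat.card G)) {x : G} (hx : x + x = 0) : x = 0 := by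
  have h2 : addOrderOf x ∣ 2 := addOrderOf_dvd_of_nsmul_eq_zero (by simpa [two_nsmul] using hx)
  have hc : addOrderOf x ∣ Nat.card G := addOrderOf_dvd_natCard x
  rcases (Nat.dvd_prime Nat.prime_two).mp h2 with h | h
  · exact AddMonoid.addOrderOf_eq_one_iff.mp h
  · exfalso
    rw [h] at hc
    exact (Nat.not_even_iff_odd.mpr hodd) (even_iff_two_dvd.mpr hc)

/-- The sum of all elements of a finite abelian group of odd order is `0`. -/
lemma MagicAux.sum_univ_eq_zero {G : Type*} [AddCommGroup G] [Fintype G]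
    (hodd : Odd (Nat.card G)) : ∑ x : G, x = 0 := by
  have h : ∑ x : G, -x = ∑ x : G, x :=
    Fintype.sum_equiv (Equiv.neg G) (fun x => -x) (fun x => x) (fun _ => rfl)
  rw [Finset.sum_neg_distrib] at h
  have h2 : (∑ x : G, x) + (∑ x : G, x) = 0 := by
    nth_rewrite 1 [← h]
    exact neg_add_cancel _
  exact MagicAux.eq_zero_of_self_add_self hodd h2

/-- Converse of Lagrange's theorem for finite abelian groups. -/
lemma MagicAux.exists_addSubgroup_card :
    ∀ (d : ℕ) (G : Type u) [AddCommGroup G] [Finite G], d ∣ Nat.card G →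
      ∃ H : AddSubgroup G, Nat.card H = d := by
  intro d
  induction d using Nat.strong_induction_on with
  | _ d ih =>
    intro G _ _ hd
    rcases eq_or_ne d 1 with rfl | hd1
    · exact ⟨⊥, by simp⟩
    rcases eq_or_ne d 0 with rfl | hd0
    · have := Nat.card_pos (α := G)
      rw [zero_dvd_iff] at hd
      omega
    obtain ⟨p, hp, hpd⟩ := Nat.exists_prime_and_dvd hd1
    haveI : Fact p.Prime := ⟨hp⟩
    haveI : Fintype G := Fintype.ofFinite G
    have hpc : p ∣ Fintype.card G := by
      rw [← Nat.card_eq_fintype_card]; exact hpd.trans hd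
    obtain ⟨x, hx⟩ := exists_prime_addOrderOf_dvd_card p hpc
    set N := AddSubgroup.zmultiples x with hNdef
    have hN : Nat.card N = p := by rw [Nat.card_zmultiples, hx]
    have hcard : Nat.card (G ⧸ N) * p = Nat.card G := by
      rw [← hN, ← AddSubgroup.card_eq_card_quotient_mul_card_addSubgroup]
    have hppos : 0 < p := hp.pos
    obtain ⟨m, hm⟩ := hd
    obtain ⟨d', hd'⟩ := hpd
    have hdvd' : d / p ∣ Nat.card (G ⧸ N) := by
      refine ⟨m, ?_⟩
      have : Nat.card (G ⧸ N) * p = (d / p * m) * p := by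
        rw [hcard, hm, hd', Nat.mul_div_cancel_left d' hppos]; ring
      exact Nat.eq_of_mul_eq_mul_right hppos this
    obtain ⟨K, hK⟩ := ih (d / p) (Nat.div_lt_self (by omega) hp.one_lt) (G ⧸ N) hdvd'
    refine ⟨K.comap (QuotientAddGroup.mk' N), ?_⟩
    have hidx : (K.comap (QuotientAddGroup.mk' N)).index = K.index :=
      AddSubgroup.index_comap_of_surjective K (QuotientAddGroup.mk'_surjective N)
    have h1 : Nat.card (K.comap (QuotientAddGroup.mk' N)) * K.index = Nat.card G := by
      rw [← hidx]; exact AddSubgroup.card_mul_index _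
    have h2 : (d / p) * K.index = Nat.card (G ⧸ N) := by
      rw [← hK]; exact AddSubgroup.card_mul_index K
    have hKidx : K.index ≠ 0 := by
      intro h
      rw [h, mul_zero] at h2
      have := Nat.card_pos (α := G ⧸ N)
      omega
    have key : Nat.card (K.comap (QuotientAddGroup.mk' N)) * K.index = d * K.index := by
      rw [h1, ← hcard, ← h2]
      rw [hd', Nat.mul_div_cancel_left d' hppos]
      ring
    exact Nat.eq_of_mul_eq_mul_right (Nat.pos_of_ne_zero hKidx) key

theorem exists_zero_sum_magic_square_odd {Γ : Type*} [AddCommGroup Γ] [Fintype Γ]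
    (n : ℕ) (hn : 3 ≤ n) (hodd : Odd n) (hcard : Fintype.card Γ = n ^ 2) :
    ∃ A : Fin n → Fin n → Γ, IsZeroSumMagicSquare A := by
  classical
  have hn0 : 0 < n := by omega
  haveI : NeZero n := ⟨by omega⟩
  have hΓ : Nat.card Γ = n ^ 2 := by rw [Nat.card_eq_fintype_card, hcard]
  obtain ⟨H, hH⟩ := MagicAux.exists_addSubgroup_card n Γ (by rw [hΓ, sq]; exact Dvd.intro n rfl)
  let π : Γ →+ Γ ⧸ H := QuotientAddGroup.mk' H
  have hQ1 : Nat.card (Γ ⧸ H) * n = n * n := by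
    conv_rhs => rw [← sq, ← hΓ, AddSubgroup.card_eq_card_quotient_mul_card_addSubgroup H, hH]
  have hQcard : Nat.card (Γ ⧸ H) = n := Nat.eq_of_mul_eq_mul_right hn0 hQ1
  haveI : Fintype (Γ ⧸ H) := Fintype.ofFinite _
  haveI : Fintype H := Fintype.ofFinite _
  have hQf : Fintype.card (Γ ⧸ H) = n := by rw [← Nat.card_eq_fintype_card, hQcard]
  have hHf : Fintype.card H = n := by rw [← Nat.card_eq_fintype_card, hH]
  obtain ⟨σ0⟩ : Nonempty (ZMod n ≃ (Γ ⧸ H)) :=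
    ⟨Fintype.equivOfCardEq (by rw [ZMod.card, hQf])⟩
  let σ : ZMod n ≃ Γ ⧸ H := σ0.trans (Equiv.subRight (σ0 0))
  have hσ0 : σ 0 = 0 := sub_self _
  obtain ⟨ρ⟩ : Nonempty (ZMod n ≃ H) :=
    ⟨Fintype.equivOfCardEq (by rw [ZMod.card, hHf])⟩
  -- the section of the quotient map
  let t0 : ZMod n → Γ := fun c => if c = 0 then 0 else (σ c).out
  have ht0 : ∀ c, π (t0 c) = σ c := by
    intro c
    by_cases hc : c = 0
    · subst hc; simp only [t0, if_pos rfl, map_zero, hσ0]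
    · simp only [t0, if_neg hc]
      exact QuotientAddGroup.out_eq' (σ c)
  have hsumσ : ∑ c : ZMod n, σ c = 0 := by
    rw [Equiv.sum_comp σ (fun q : Γ ⧸ H => q)]
    exact MagicAux.sum_univ_eq_zero (by rw [hQcard]; exact hodd)
  set S : Γ := ∑ c : ZMod n, t0 c with hSdef
  have hπS : π S = 0 := by
    rw [hSdef, map_sum, Finset.sum_congr rfl (fun c _ => ht0 c)]
    exact hsumσ
  let t : ZMod n → Γ := fun c => if c = 1 then t0 c - S else t0 c
  have ht : ∀ c, π (t c) = σ c := by
    intro c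
    by_cases hc : c = 1 <;> simp only [t, hc, if_pos, if_neg, if_true, if_false, map_sub,
      hπS, sub_zero, ht0]
  have htsum : ∑ c : ZMod n, t c = 0 := by
    have heq : ∀ c : ZMod n, t c = t0 c - (if c = 1 then S else 0) := by
      intro c; by_cases hc : c = 1 <;> simp [t, hc]
    rw [Finset.sum_congr rfl (fun c _ => heq c), Finset.sum_sub_distrib,
      Finset.sum_ite_eq' Finset.univ (1 : ZMod n) (fun _ => S)]
    simp [hSdef]
  have h01 : (0 : ZMod n) ≠ 1 := by
    haveI : Fact (1 < n) := ⟨by omega⟩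
    exact zero_ne_one
  have ht00 : t 0 = 0 := by simp [t, t0, h01]
  -- the embedding of Fin n into ZMod n
  let e : Fin n → ZMod n := fun i => ((i : ℕ) : ZMod n)
  have heinj : Function.Injective e := by
    intro i j hij
    have h1 : ((i : ℕ) : ZMod n).val = ((j : ℕ) : ZMod n).val := congrArg ZMod.val hij
    rw [ZMod.val_natCast_of_lt i.isLt, ZMod.val_natCast_of_lt j.isLt] at h1
    exact Fin.ext h1
  have hebij : Function.Bijective e := by
    rw [Fintype.bijective_iff_injective_and_card]
    exact ⟨heinj, by simp [ZMod.card]⟩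
  -- doubling is injective in ZMod n
  have hZodd : Odd (Nat.card (ZMod n)) := by
    rw [Nat.card_eq_fintype_card, ZMod.card]; exact hodd
  have h2inj : ∀ a b : ZMod n, a + a = b + b → a = b := by
    intro a b hab
    have h1 : (a - b) + (a - b) = 0 := by linear_combination hab
    have h2 := MagicAux.eq_zero_of_self_add_self hZodd h1
    exact sub_eq_zero.mp h2
  have hdiagbij : Function.Bijective (fun i : Fin n => e i + e i) := by
    rw [Fintype.bijective_iff_injective_and_card]
    constructor
    · intro i j hij
      exact heinj (h2inj _ _ hij)
    · simp [ZMod.card]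
  -- generic zero-sum lemmas
  have hsum_t : ∀ f : Fin n → ZMod n, Function.Bijective f → ∑ j, t (f j) = 0 := by
    intro f hf
    rw [Fintype.sum_bijective f hf _ t (fun _ => rfl)]
    exact htsum
  have hsum_ρ : ∀ f : Fin n → ZMod n, Function.Bijective f →
      ∑ j, ((ρ (f j) : H) : Γ) = 0 := by
    intro f hf
    rw [Fintype.sum_bijective f hf _ (fun d => ((ρ d : H) : Γ)) (fun _ => rfl)]
    rw [Fintype.sum_bijective ρ ρ.bijective _ (fun h : H => (h : Γ)) (fun _ => rfl)]
    have hmap : ∑ h : H, (h : Γ) = ((∑ h : H, h : H) : Γ) :=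
      (map_sum H.subtype (fun h => h) Finset.univ).symm
    rw [hmap, MagicAux.sum_univ_eq_zero (G := H) (by rw [hH]; exact hodd)]
    rfl
  -- the magic square
  refine ⟨fun i j => t (e i - e j) + ((ρ (e i + e j) : H) : Γ), ?_, ?_, ?_, ?_, ?_⟩
  · -- bijectivity
    rw [Fintype.bijective_iff_injective_and_card]
    constructor
    · rintro ⟨i, j⟩ ⟨i', j'⟩ hA
      simp only at hA
      have hρ0 : ∀ d : ZMod n, π ((ρ d : H) : Γ) = 0 := fun d =>
        (QuotientAddGroup.eq_zero_iff _).mpr (ρ d).2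
      have hπA : σ (e i - e j) = σ (e i' - e j') := by
        have h := congrArg π hA
        simpa only [map_add, ht, hρ0, add_zero] using h
      have hc : e i - e j = e i' - e j' := σ.injective hπA
      rw [hc] at hA
      have hd : e i + e j = e i' + e j' := by
        have h1 := add_left_cancel hA
        have h2 : (ρ (e i + e j) : H) = ρ (e i' + e j') := Subtype.coe_injective h1
        exact ρ.injective h2
      have hi : i = i' := heinj (h2inj _ _ (by linear_combination hc + hd))
      have hj : j = j' := heinj (h2inj _ _ (by linear_combination hd - hc))
      simp [hi, hj]
    · rw [Fintype.card_prod, Fintype.card_fin, hcard, sq]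
  · -- rows
    intro i
    rw [Finset.sum_add_distrib]
    rw [hsum_t (fun j => e i - e j) ((Equiv.subLeft (e i)).bijective.comp hebij)]
    rw [hsum_ρ (fun j => e i + e j) ((Equiv.addLeft (e i)).bijective.comp hebij)]
    rw [add_zero]
  · -- columns
    intro j
    rw [Finset.sum_add_distrib]
    rw [hsum_t (fun i => e i - e j) ((Equiv.subRight (e j)).bijective.comp hebij)]
    rw [hsum_ρ (fun i => e i + e j) ((Equiv.addRight (e j)).bijective.comp hebij)]
    rw [add_zero]
  · -- main diagonal
    rw [Finset.sum_add_distrib]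
    have h1 : ∑ i : Fin n, t (e i - e i) = 0 := by
      simp [sub_self, ht00]
    rw [h1, hsum_ρ (fun i => e i + e i) hdiagbij, add_zero]
  · -- antidiagonal
    rw [Finset.sum_add_distrib]
    set c₀ : ZMod n := ((n - 1 : ℕ) : ZMod n) with hc₀
    have hrev : ∀ i : Fin n, e i + e i.rev = c₀ := by
      intro i
      have hval : (i : ℕ) + (i.rev : ℕ) = n - 1 := by
        rw [Fin.val_rev]; omega
      rw [hc₀, ← hval, Nat.cast_add]
    have h1 : ∑ i : Fin n, t (e i - e i.rev) = 0 := by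
      have hf : (fun i : Fin n => e i - e i.rev) =
          (fun x : ZMod n => x - c₀) ∘ (fun i : Fin n => e i + e i) := by
        funext i
        simp only [Function.comp]
        rw [← hrev i]
        ring
      refine hsum_t _ ?_
      rw [hf]
      exact (Equiv.subRight c₀).bijective.comp hdiagbij
    have h2 : ∑ i : Fin n, ((ρ (e i + e i.rev) : H) : Γ) = 0 := by
      have heq : ∀ i : Fin n, ((ρ (e i + e i.rev) : H) : Γ) = ((ρ c₀ : H) : Γ) := by
        intro i; rw [hrev i]
      rw [Finset.sum_congr rfl (fun i _ => heq i), Finset.sum_const, Finset.card_univ,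
        Fintype.card_fin]
      have hz : n • (ρ c₀ : H) = 0 := by
        have hcn := card_nsmul_eq_zero (G := H) (x := ρ c₀)
        rwa [hHf] at hcn
      calc n • ((ρ c₀ : H) : Γ) = ((n • (ρ c₀ : H) : H) : Γ) := by
            push_cast
            rfl
        _ = 0 := by rw [hz]; rfl
    rw [h1, h2, add_zero]
end

section
/- Let p > 2 be prime and let α ≥ β ≥ 1 be integers with α + β = 2λ. Then there exists a zero-sum (Z_{p^α} ⊕ Z_{p^β})-magic square of side p^λ. -/
open Finset

private lemma aux_sum_div {M : Type*} [AddCommMonoid M] (b : ℕ) (hb : 0 < b) (N : ℕ)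
    (f : ℕ → M) :
    ∑ k ∈ Finset.range (b * N), f (k / b) = ∑ r ∈ Finset.range N, b • f r := by
  induction N with
  | zero => simp
  | succ N ih =>
    rw [Finset.sum_range_succ, ← ih, Nat.mul_succ, Finset.range_eq_Ico,
      ← Finset.sum_Ico_consecutive (fun k => f (k / b)) (Nat.zero_le (b * N))
        (Nat.le_add_right (b * N) b)]
    congr 1
    · rw [Finset.range_eq_Ico]
    rw [Finset.sum_Ico_eq_sum_range]
    have h1 : b * N + b - b * N = b := by omega
    rw [h1]
    have h2 : ∀ k ∈ Finset.range b, f ((b * N + k) / b) = f N := by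
      intro k hk
      simp only [Finset.mem_range] at hk
      congr 1
      rw [Nat.mul_add_div hb, Nat.div_eq_of_lt hk, add_zero]
    rw [Finset.sum_congr rfl h2, Finset.sum_const, Finset.card_range]

private lemma magic_general (q m b a : ℕ) (hq : Odd q) (hm : Odd m) (hb : 0 < b)
    (hqb : q = b * m) (ha : a = q * m) :
    ∃ A : Fin q → Fin q → ZMod a × ZMod b, IsZeroSumMagicSquare A := by
  have hq0 : 0 < q := hq.pos
  have hm0 : 0 < m := hm.pos
  haveI : NeZero q := ⟨hq0.ne'⟩
  haveI : NeZero m := ⟨hm0.ne'⟩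
  haveI : NeZero b := ⟨hb.ne'⟩
  haveI : NeZero a := ⟨by rw [ha]; positivity⟩
  have hmdvd : m ∣ a := ⟨q, by rw [ha]; ring⟩
  -- the basic casting map
  set x : Fin q → ZMod q := fun i => ((i : ℕ) : ZMod q) with hx
  have hxinj : Function.Injective x := by
    intro i j h
    have h2 : (x i).val = (x j).val := by rw [h]
    simp only [hx] at h2
    rw [ZMod.val_cast_of_lt i.isLt, ZMod.val_cast_of_lt j.isLt] at h2
    exact Fin.ext h2
  have hxbij : Function.Bijective x :=
    (Fintype.bijective_iff_injective_and_card x).2 ⟨hxinj, by simp [ZMod.card]⟩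
  -- sum of all elements is zero
  obtain ⟨r, hr⟩ := hq
  have hqodd : Odd q := ⟨r, hr⟩
  have hSnat : ∑ k ∈ Finset.range q, k = q * r := by
    have h2 := Finset.sum_range_id_mul_two q
    have h3 : q * (q - 1) = (q * r) * 2 := by
      rw [show q - 1 = 2 * r by omega]; ring
    omega
  have hsum_x : ∑ j : Fin q, x j = 0 := by
    simp only [hx]
    rw [Fin.sum_univ_eq_sum_range (fun k => ((k : ℕ) : ZMod q)) q, ← Nat.cast_sum, hSnat]
    push_cast
    rw [ZMod.natCast_self, zero_mul]
  have hrevsum : ∑ i : Fin q, x i.rev = 0 := by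
    rw [Fintype.sum_bijective (Fin.rev) Fin.rev_bijective _ x (fun i => rfl)]
    exact hsum_x
  -- q • anything is zero in ZMod q
  have hqsmul : ∀ z : ZMod q, q • z = 0 := by
    intro z
    rw [nsmul_eq_mul, ZMod.natCast_self, zero_mul]
  -- 2 is a unit
  have h2u : IsUnit (2 : ZMod q) := by
    have h2 := (ZMod.isUnit_iff_coprime 2 q).2 (Nat.coprime_two_left.2 hqodd)
    simpa using h2
  -- the multiplication-by-m embedding
  have hkey : ∀ u : ℕ, ((m * (u % q) : ℕ) : ZMod a) = ((m * u : ℕ) : ZMod a) := by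
    intro u
    have hqm : ((q : ZMod a) * m) = 0 := by
      rw [← Nat.cast_mul, ← ha, ZMod.natCast_self]
    conv_rhs => rw [← Nat.div_add_mod u q]
    push_cast
    linear_combination (-((u / q : ℕ) : ZMod a)) * hqm
  set μ : ZMod q →+ ZMod a :=
    { toFun := fun z => ((m * z.val : ℕ) : ZMod a)
      map_zero' := by simp
      map_add' := by
        intro z w
        simp only [ZMod.val_add, hkey]
        push_cast
        ring } with hμdef
  have hμ : ∀ z : ZMod q, μ z = ((m * z.val : ℕ) : ZMod a) := fun _ => rfl
  have hμinj : Function.Injective μ := by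
    intro z w h
    rw [hμ z, hμ w, ZMod.natCast_eq_natCast_iff, ha, mul_comm q m] at h
    have h2 := Nat.ModEq.mul_left_cancel' hm0.ne' h
    have h3 : z.val = w.val := by
      unfold Nat.ModEq at h2
      rw [Nat.mod_eq_of_lt (ZMod.val_lt z), Nat.mod_eq_of_lt (ZMod.val_lt w)] at h2
      exact h2
    exact ZMod.val_injective q h3
  have hρμ0 : ∀ z : ZMod q, (ZMod.castHom hmdvd (ZMod m)) (μ z) = 0 := by
    intro z
    rw [hμ z, map_natCast]
    push_cast
    rw [ZMod.natCast_self, zero_mul]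
  -- the correction function ε
  set c : ℕ := m * ((m - 1) / 2) with hc
  set ε : ℕ → ZMod a := fun k => (k : ZMod a) - (if k = 0 then ((c : ℕ) : ZMod a) else 0)
    with hε
  have hεsum : ∑ k ∈ Finset.range m, ε k = 0 := by
    simp only [hε]
    rw [Finset.sum_sub_distrib]
    have h1 : ∑ k ∈ Finset.range m, ((k : ℕ) : ZMod a) = ((c : ℕ) : ZMod a) := by
      rw [← Nat.cast_sum, Finset.sum_range_id, hc]
      obtain ⟨s, hs⟩ := hm
      congr 1
      rw [Nat.mul_div_assoc m (show 2 ∣ m - 1 by omega)]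
    rw [h1, Finset.sum_ite_eq' (Finset.range m) 0 (fun _ => ((c : ℕ) : ZMod a))]
    simp [hm0]
  have hρε : ∀ k : ℕ, (ZMod.castHom hmdvd (ZMod m)) (ε k) = (k : ZMod m) := by
    intro k
    simp only [hε]
    split_ifs with hk
    · subst hk
      have hcz : ((c : ℕ) : ZMod m) = 0 := by
        rw [ZMod.natCast_eq_zero_iff, hc]
        exact ⟨(m - 1) / 2, rfl⟩
      rw [Nat.cast_zero, zero_sub, map_neg, map_natCast, hcz, neg_zero, Nat.cast_zero]
    · simp
  have hε0 : q • ε 0 = 0 := by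
    have hd : ((q * c : ℕ) : ZMod a) = 0 := by
      rw [ZMod.natCast_eq_zero_iff]
      exact ⟨(m - 1) / 2, by rw [ha, hc]; ring⟩
    simp only [hε, Nat.cast_zero, if_pos rfl, zero_sub, smul_neg, nsmul_eq_mul]
    push_cast at hd ⊢
    linear_combination -hd
  -- the sum of ε of the digits over all of ZMod q is zero
  have hE0 : ∑ t : ZMod q, ε (t.val / b) = 0 := by
    have e1 : ∑ t : ZMod q, ε (t.val / b) = ∑ k ∈ Finset.range q, ε (k / b) := by
      rw [← Fin.sum_univ_eq_sum_range (fun k => ε (k / b)) q]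
      exact (Fintype.sum_bijective x hxbij _ _
        (fun i => by simp only [hx]; rw [ZMod.val_cast_of_lt i.isLt])).symm
    rw [e1, hqb, aux_sum_div b hb m, ← Finset.smul_sum, hεsum, smul_zero]
  -- the second-coordinate projection
  set π : ZMod q →+* ZMod b := ZMod.castHom (⟨m, hqb⟩ : b ∣ q) (ZMod b) with hπ
  have hπval : ∀ t : ZMod q, π t = ((t.val : ℕ) : ZMod b) := by
    intro t
    rw [hπ, ZMod.castHom_apply, ← ZMod.natCast_val]
  -- rev facts
  have hrev : ∀ i : Fin q, x i.rev = ((q - 1 : ℕ) : ZMod q) - x i := by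
    intro i
    simp only [hx]
    have h1 : (i.rev : ℕ) = (q - 1) - (i : ℕ) := by rw [Fin.val_rev]; omega
    rw [h1, Nat.cast_sub (by have := i.isLt; omega)]
  -- the square
  set F : Fin q → Fin q → ZMod a :=
    fun i j => μ (x i + x j) + ε ((x i - x j).val / b) with hF
  set G : Fin q → Fin q → ZMod b := fun i j => π (x i - x j) with hG
  refine ⟨fun i j => (F i j, G i j), ?_, ?_, ?_, ?_, ?_⟩
  · -- bijectivity
    rw [Fintype.bijective_iff_injective_and_card]
    constructor
    · rintro ⟨i, j⟩ ⟨i', j'⟩ h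
      simp only [Prod.mk.injEq] at h
      obtain ⟨hFeq, hGeq⟩ := h
      simp only [hF] at hFeq
      simp only [hG] at hGeq
      -- equal mod b
      have hvb : (x i - x j).val % b = (x i' - x j').val % b := by
        rw [hπval, hπval, ZMod.natCast_eq_natCast_iff] at hGeq
        exact hGeq
      -- equal digits
      have hdiv : (x i - x j).val / b = (x i' - x j').val / b := by
        have h6 := congrArg (ZMod.castHom hmdvd (ZMod m)) hFeq
        simp only [map_add, hρμ0, zero_add, hρε] at h6
        have hlt : (x i - x j).val / b < m := by
          rw [Nat.div_lt_iff_lt_mul hb, mul_comm m b, ← hqb]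
          exact ZMod.val_lt _
        have hlt' : (x i' - x j').val / b < m := by
          rw [Nat.div_lt_iff_lt_mul hb, mul_comm m b, ← hqb]
          exact ZMod.val_lt _
        rw [ZMod.natCast_eq_natCast_iff] at h6
        unfold Nat.ModEq at h6
        rw [Nat.mod_eq_of_lt hlt, Nat.mod_eq_of_lt hlt'] at h6
        exact h6
      have ht : x i - x j = x i' - x j' := by
        apply ZMod.val_injective
        conv_lhs => rw [← Nat.div_add_mod (x i - x j).val b, hdiv, hvb]
        rw [Nat.div_add_mod]
      have hμeq : μ (x i + x j) = μ (x i' + x j') := by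
        rw [ht] at hFeq
        exact add_right_cancel hFeq
      have hs : x i + x j = x i' + x j' := hμinj hμeq
      have hii : x i = x i' := by
        apply h2u.mul_left_cancel
        linear_combination hs + ht
      have hjj : x j = x j' := by
        apply h2u.mul_left_cancel
        linear_combination hs - ht
      exact Prod.ext (hxinj hii) (hxinj hjj)
    · simp only [Fintype.card_prod, Fintype.card_fin, ZMod.card]
      rw [ha, hqb]; ring
  · -- rows
    intro i
    refine Prod.ext ?_ ?_
    · rw [Prod.fst_sum]
      dsimp only
      simp only [hF]
      rw [Finset.sum_add_distrib, ← map_sum, Finset.sum_add_distrib, Finset.sum_const,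
        Finset.card_univ, Fintype.card_fin, hsum_x, add_zero, hqsmul, map_zero, zero_add]
      calc ∑ j : Fin q, ε ((x i - x j).val / b)
          = ∑ t : ZMod q, ε (t.val / b) :=
            Fintype.sum_bijective ((Equiv.subLeft (x i)) ∘ x)
              ((Equiv.subLeft (x i)).bijective.comp hxbij) _ _ (fun j => rfl)
        _ = 0 := hE0
    · rw [Prod.snd_sum]
      dsimp only
      simp only [hG]
      rw [← map_sum, Finset.sum_sub_distrib, Finset.sum_const, Finset.card_univ,
        Fintype.card_fin, hsum_x, hqsmul, sub_zero, map_zero]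
      rfl
  · -- columns
    intro j
    refine Prod.ext ?_ ?_
    · rw [Prod.fst_sum]
      dsimp only
      simp only [hF]
      rw [Finset.sum_add_distrib, ← map_sum, Finset.sum_add_distrib, Finset.sum_const,
        Finset.card_univ, Fintype.card_fin, hsum_x, zero_add, hqsmul, map_zero, zero_add]
      calc ∑ i : Fin q, ε ((x i - x j).val / b)
          = ∑ t : ZMod q, ε (t.val / b) :=
            Fintype.sum_bijective ((Equiv.subRight (x j)) ∘ x)
              ((Equiv.subRight (x j)).bijective.comp hxbij) _ _ (fun i => rfl)
        _ = 0 := hE0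
    · rw [Prod.snd_sum]
      dsimp only
      simp only [hG]
      rw [← map_sum, Finset.sum_sub_distrib, Finset.sum_const, Finset.card_univ,
        Fintype.card_fin, hsum_x, hqsmul, sub_zero, map_zero]
      rfl
  · -- diagonal
    refine Prod.ext ?_ ?_
    · rw [Prod.fst_sum]
      dsimp only
      simp only [hF, sub_self, ZMod.val_zero, Nat.zero_div]
      rw [Finset.sum_add_distrib, ← map_sum]
      have h1 : ∑ i : Fin q, (x i + x i) = 0 := by
        rw [Finset.sum_add_distrib, hsum_x, add_zero]
      rw [h1, map_zero, zero_add, Finset.sum_const, Finset.card_univ, Fintype.card_fin, hε0]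
      rfl
    · rw [Prod.snd_sum]
      dsimp only
      simp only [hG, sub_self, map_zero]
      rw [Finset.sum_const, smul_zero]
      rfl
  · -- antidiagonal
    refine Prod.ext ?_ ?_
    · rw [Prod.fst_sum]
      dsimp only
      simp only [hF]
      rw [Finset.sum_add_distrib]
      have part1 : ∑ i : Fin q, μ (x i + x i.rev) = 0 := by
        rw [← map_sum]
        have h1 : ∑ i : Fin q, (x i + x i.rev) = 0 := by
          rw [Finset.sum_add_distrib, hsum_x, hrevsum, add_zero]
        rw [h1, map_zero]
      have part2 : ∑ i : Fin q, ε ((x i - x i.rev).val / b) = 0 := by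
        have hbij : Function.Bijective (fun i : Fin q => x i - x i.rev) := by
          have heq : (fun i : Fin q => x i - x i.rev)
              = (fun z : ZMod q => 2 * z - ((q - 1 : ℕ) : ZMod q)) ∘ x := by
            funext i
            simp only [Function.comp_apply]
            rw [hrev i]
            ring
          rw [heq]
          have hb2 : Function.Bijective (fun z : ZMod q => 2 * z) := by
            have hbb := Units.mulLeft_bijective h2u.unit
            simpa [h2u.unit_spec] using hbb
          exact ((Equiv.subRight ((q - 1 : ℕ) : ZMod q)).bijective.comp hb2).comp hxbij
        exact (Fintype.sum_bijective _ hbij _ _ (fun i => rfl)).trans hE0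
      rw [part1, part2, add_zero]
      rfl
    · rw [Prod.snd_sum]
      dsimp only
      simp only [hG]
      rw [← map_sum]
      have h1 : ∑ i : Fin q, (x i - x i.rev) = 0 := by
        rw [Finset.sum_sub_distrib, hsum_x, hrevsum, sub_zero]
      rw [h1, map_zero]
      rfl

theorem exists_zero_sum_magic_square_p_alpha_beta (p : ℕ) (hp : p.Prime) (hp2 : 2 < p)
    (α β lam : ℕ) (hβ : 1 ≤ β) (hαβ : β ≤ α) (hsum : α + β = 2 * lam) :
    ∃ A : Fin (p ^ lam) → Fin (p ^ lam) → ZMod (p ^ α) × ZMod (p ^ β),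
      IsZeroSumMagicSquare A := by
  have hpodd : Odd p := hp.odd_of_ne_two (by omega)
  exact magic_general (p ^ lam) (p ^ (lam - β)) (p ^ β) (p ^ α) hpodd.pow hpodd.pow
    (pow_pos hp.pos β)
    (by rw [← pow_add]; congr 1; omega)
    (by rw [← pow_add]; congr 1; omega)
end

section
/- Let Γ = Z_{2^α} ⊕ H be an Abelian group of order 2^{2γ} with γ ≥ 3, 2γ = α + β, |H| = 2^β, and α ≤ β with α ≥ 2. If there exists a zero-sum (Z_{2^{α−2}} ⊕ H)-magic square of side 2^{γ−1}, then there exists a zero-sum Γ-magic square of side 2^γ. -/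
open Finset

section Aux
set_option linter.unreachableTactic false
set_option linter.unusedTactic false

/-- The coset-representative pattern. -/
def cNat (n : ℕ) (i₀ : Fin n) (i₁ j₁ : Fin 2) : ℕ :=
  if i₀.val < n / 2 then 2 * j₁.val + i₁.val
  else if i₁.val = 0 then 2 * j₁.val else 3 - 2 * j₁.val

lemma cNat_lt (n : ℕ) (i₀ : Fin n) (i₁ j₁ : Fin 2) : cNat n i₀ i₁ j₁ < 4 := by
  have h1 := i₁.isLt; have h2 := j₁.isLt
  unfold cNat; split_ifs <;> omega

lemma cNat_inj (n : ℕ) (i₀ : Fin n) (i₁ j₁ i₁' j₁' : Fin 2)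
    (h : cNat n i₀ i₁ j₁ = cNat n i₀ i₁' j₁') : i₁ = i₁' ∧ j₁ = j₁' := by
  have h1 := i₁.isLt; have h2 := j₁.isLt; have h3 := i₁'.isLt; have h4 := j₁'.isLt
  unfold cNat at h
  constructor <;> apply Fin.ext <;> (split_ifs at h <;> omega)

lemma cNat_row (n : ℕ) (i₀ : Fin n) (i₁ : Fin 2) :
    ∑ j₁ : Fin 2, cNat n i₀ i₁ j₁ = 2 + 2 * i₁.val := by
  have h1 := i₁.isLt
  rw [Fin.sum_univ_two]
  unfold cNat
  simp only [Fin.val_zero, Fin.val_one]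
  norm_num
  try split_ifs <;> omega

lemma cNat_col (n : ℕ) (i₀ : Fin n) (j₁ : Fin 2) :
    ∑ i₁ : Fin 2, cNat n i₀ i₁ j₁ = if i₀.val < n / 2 then 1 + 4 * j₁.val else 3 := by
  have h2 := j₁.isLt
  rw [Fin.sum_univ_two]
  unfold cNat
  simp only [Fin.val_zero, Fin.val_one]
  norm_num
  try split_ifs <;> omega

lemma cNat_diag (n : ℕ) (i₀ : Fin n) :
    ∑ i₁ : Fin 2, cNat n i₀ i₁ i₁ = if i₀.val < n / 2 then 3 else 1 := by
  rw [Fin.sum_univ_two]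
  unfold cNat
  simp only [Fin.val_zero, Fin.val_one]
  norm_num
  try split_ifs <;> omega

lemma cNat_anti (n : ℕ) (i₀ : Fin n) :
    ∑ i₁ : Fin 2, cNat n i₀ i₁ i₁.rev = if i₀.val < n / 2 then 3 else 5 := by
  have hr0 : ((0 : Fin 2).rev : Fin 2) = 1 := by decide
  have hr1 : ((1 : Fin 2).rev : Fin 2) = 0 := by decide
  rw [Fin.sum_univ_two, hr0, hr1]
  unfold cNat
  simp only [Fin.val_zero, Fin.val_one]
  norm_num
  try split_ifs <;> omega

lemma halfSplit (n : ℕ) (v₁ v₂ : ℕ) :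
    ∑ i₀ : Fin n, (if i₀.val < n / 2 then v₁ else v₂)
      = n / 2 * v₁ + (n - n / 2) * v₂ := by
  rw [Fin.sum_univ_eq_sum_range (fun k => if k < n / 2 then v₁ else v₂) n]
  rw [Finset.range_eq_Ico,
    ← Finset.sum_Ico_consecutive _ (Nat.zero_le (n / 2)) (Nat.div_le_self n 2)]
  have h1 : ∑ i ∈ Finset.Ico 0 (n / 2), (if i < n / 2 then v₁ else v₂) = n / 2 * v₁ := by
    rw [Finset.sum_congr rfl (fun i hi => if_pos (Finset.mem_Ico.mp hi).2),
      Finset.sum_const, Nat.card_Ico, smul_eq_mul, Nat.sub_zero]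
  have h2 : ∑ i ∈ Finset.Ico (n / 2) n, (if i < n / 2 then v₁ else v₂) = (n - n / 2) * v₂ := by
    rw [Finset.sum_congr rfl (fun i hi => if_neg (by have := (Finset.mem_Ico.mp hi).1; omega)),
      Finset.sum_const, Nat.card_Ico, smul_eq_mul]
  rw [h1, h2]

end Aux

theorem zero_sum_magic_square_doubling {H : Type*} [AddCommGroup H] [Fintype H]
    (α β γ : ℕ) (hγ : 3 ≤ γ) (hα2 : 2 ≤ α) (hαβ : α ≤ β) (hsum : α + β = 2 * γ)
    (hH : Fintype.card H = 2 ^ β)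
    (hsq : ∃ A : Fin (2 ^ (γ - 1)) → Fin (2 ^ (γ - 1)) → ZMod (2 ^ (α - 2)) × H,
      IsZeroSumMagicSquare A) :
    ∃ B : Fin (2 ^ γ) → Fin (2 ^ γ) → ZMod (2 ^ α) × H,
      IsZeroSumMagicSquare B := by
  haveI : NeZero (2 ^ (α - 2)) := ⟨pow_ne_zero _ two_ne_zero⟩
  haveI : NeZero (2 ^ α) := ⟨pow_ne_zero _ two_ne_zero⟩
  set n : ℕ := 2 ^ (γ - 1) with hn
  obtain ⟨A, hAbij, hrow, hcol, hdiag, hanti⟩ := hsq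
  have hγ1 : γ - 1 + 1 = γ := by omega
  have hn2 : n * 2 = 2 ^ γ := by rw [hn, ← pow_succ, hγ1]
  have hα : α - 2 + 2 = α := by omega
  have hm4 : 2 ^ (α - 2) * 4 = 2 ^ α := by
    conv_rhs => rw [← hα]
    rw [pow_succ, pow_succ]; ring
  have hαγ : α ≤ γ := by omega
  have hhalf : n / 2 = 2 ^ (γ - 2) := by
    have : n = 2 ^ (γ - 2) * 2 := by rw [hn, ← pow_succ]; congr 1; omega
    omega
  have hq4 : 2 ^ (γ - 2) * 4 = 2 ^ γ := by
    have h : γ - 2 + 2 = γ := by omega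
    conv_rhs => rw [← h]
    rw [pow_succ, pow_succ]; ring
  have hnhalf : n - n / 2 = 2 ^ (γ - 2) := by omega
  -- casts of multiples of 2^γ vanish
  have hkey : ∀ k : ℕ, 2 ^ γ ∣ k → ((k : ZMod (2 ^ α)) = 0) := by
    intro k hk
    rw [ZMod.natCast_eq_zero_iff]
    exact dvd_trans (pow_dvd_pow 2 hαγ) hk
  -- additivity of the ×4 embedding
  have hadd : ∀ a b : ZMod (2 ^ (α - 2)),
      ((4 * (a + b).val : ℕ) : ZMod (2 ^ α))
        = ((4 * a.val : ℕ) : ZMod (2 ^ α)) + ((4 * b.val : ℕ) : ZMod (2 ^ α)) := by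
    intro a b
    have h1 : (a + b).val = (a.val + b.val) % 2 ^ (α - 2) := ZMod.val_add a b
    have h2 : 4 * (a.val + b.val)
        = 4 * ((a.val + b.val) % 2 ^ (α - 2)) + 2 ^ α * ((a.val + b.val) / 2 ^ (α - 2)) := by
      conv_lhs => rw [← Nat.mod_add_div (a.val + b.val) (2 ^ (α - 2))]
      rw [← hm4]; ring
    calc ((4 * (a + b).val : ℕ) : ZMod (2 ^ α))
        = ((4 * ((a.val + b.val) % 2 ^ (α - 2)) : ℕ) : ZMod (2 ^ α)) := by rw [h1]
      _ = ((4 * (a.val + b.val) : ℕ) : ZMod (2 ^ α)) := by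
          rw [h2, Nat.cast_add,
            (ZMod.natCast_eq_zero_iff _ _).mpr (dvd_mul_right _ _), add_zero]
      _ = _ := by push_cast; ring
  -- the embedding homomorphism
  set ψ : ZMod (2 ^ (α - 2)) × H →+ ZMod (2 ^ α) × H :=
    AddMonoidHom.mk' (fun x => (((4 * x.1.val : ℕ) : ZMod (2 ^ α)), x.2))
      (by
        intro x y
        apply Prod.ext
        · simpa using hadd x.1 y.1
        · rfl) with hψ
  set E : Fin n × Fin 2 ≃ Fin (2 ^ γ) := finProdFinEquiv.trans (finCongr hn2) with hE
  have hEval : ∀ p : Fin n × Fin 2, ((E p : Fin (2 ^ γ)) : ℕ) = p.2.val + 2 * p.1.val := by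
    intro p; simp [hE, finProdFinEquiv]
  have hrev : ∀ p : Fin n × Fin 2, (E p).rev = E (p.1.rev, p.2.rev) := by
    intro p
    apply Fin.ext
    have b1 := p.1.isLt
    have b2 := p.2.isLt
    rw [Fin.val_rev, hEval, hEval]
    simp only [Fin.val_rev]
    omega
  set F : (Fin n × Fin 2) → (Fin n × Fin 2) → ZMod (2 ^ α) × H :=
    fun p q => ψ (A p.1 q.1) + (((cNat n p.1 p.2 q.2 : ℕ) : ZMod (2 ^ α)), 0) with hF
  -- pair sums
  have hpair : ∀ (f : Fin n × Fin 2 → ℕ),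
      ∑ x : Fin n × Fin 2, (((f x : ℕ) : ZMod (2 ^ α)), (0 : H))
        = (((∑ x : Fin n × Fin 2, f x : ℕ) : ZMod (2 ^ α)), (0 : H)) := by
    intro f
    apply Prod.ext
    · rw [Prod.fst_sum]; simp [Nat.cast_sum]
    · rw [Prod.snd_sum]; simp
  have hψsum : ∀ (f : Fin n → ZMod (2 ^ (α - 2)) × H), (∑ j₀, f j₀ = 0) →
      ∑ q : Fin n × Fin 2, ψ (f q.1) = 0 := by
    intro f hf
    rw [Fintype.sum_prod_type]
    simp only [Finset.sum_const, Finset.card_univ, Fintype.card_fin]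
    rw [← Finset.smul_sum, ← map_sum, hf, map_zero, smul_zero]
  have hcsum : ∀ (g : Fin n × Fin 2 → ℕ), 2 ^ γ ∣ (∑ q : Fin n × Fin 2, g q) →
      ∑ q : Fin n × Fin 2, (((g q : ℕ) : ZMod (2 ^ α)), (0 : H)) = 0 := by
    intro g hg
    rw [hpair, hkey _ hg]
    rfl
  refine ⟨fun i j => F (E.symm i) (E.symm j), ?_, ?_, ?_, ?_, ?_⟩
  · -- bijectivity
    have hcomp : (fun p : Fin (2 ^ γ) × Fin (2 ^ γ) => F (E.symm p.1) (E.symm p.2))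
        = (fun q : (Fin n × Fin 2) × (Fin n × Fin 2) => F q.1 q.2)
          ∘ (Equiv.prodCongr E.symm E.symm) := rfl
    rw [hcomp]
    apply Function.Bijective.comp _ (Equiv.bijective _)
    rw [Fintype.bijective_iff_injective_and_card]
    constructor
    · rintro ⟨⟨i₀, i₁⟩, ⟨j₀, j₁⟩⟩ ⟨⟨i₀', i₁'⟩, ⟨j₀', j₁'⟩⟩ h
      simp only [hF, hψ, AddMonoidHom.mk'_apply, Prod.mk_add_mk, add_zero,
        Prod.mk.injEq] at h
      obtain ⟨h1, h2⟩ := h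
      rw [← Nat.cast_add, ← Nat.cast_add] at h1
      have hv : (A i₀ j₀).1.val < 2 ^ (α - 2) := ZMod.val_lt _
      have hv' : (A i₀' j₀').1.val < 2 ^ (α - 2) := ZMod.val_lt _
      have hc := cNat_lt n i₀ i₁ j₁
      have hc' := cNat_lt n i₀' i₁' j₁'
      have hb : 4 * (A i₀ j₀).1.val + cNat n i₀ i₁ j₁ < 2 ^ α := by omega
      have hb' : 4 * (A i₀' j₀').1.val + cNat n i₀' i₁' j₁' < 2 ^ α := by omega
      have hnat : 4 * (A i₀ j₀).1.val + cNat n i₀ i₁ j₁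
          = 4 * (A i₀' j₀').1.val + cNat n i₀' i₁' j₁' := by
        have := congrArg ZMod.val h1
        rwa [ZMod.val_cast_of_lt hb, ZMod.val_cast_of_lt hb'] at this
      have hval : (A i₀ j₀).1.val = (A i₀' j₀').1.val := by omega
      have hAeq : A i₀ j₀ = A i₀' j₀' :=
        Prod.ext (ZMod.val_injective _ hval) h2
      have hij : ((i₀, j₀) : Fin n × Fin n) = (i₀', j₀') :=
        hAbij.1 (a₁ := (i₀, j₀)) (a₂ := (i₀', j₀')) hAeq
      obtain ⟨e1, e2⟩ := Prod.mk.injEq .. ▸ hij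
      subst e1; subst e2
      have hceq : cNat n i₀ i₁ j₁ = cNat n i₀ i₁' j₁' := by omega
      obtain ⟨e3, e4⟩ := cNat_inj n i₀ i₁ j₁ i₁' j₁' hceq
      subst e3; subst e4
      rfl
    · simp only [Fintype.card_prod, Fintype.card_fin, ZMod.card, hH]
      rw [hn, ← pow_succ, hγ1, ← pow_add, ← pow_add, hsum]
      ring_nf
  · -- rows
    intro i
    have h0 : ∑ j, F (E.symm i) (E.symm j) = ∑ q, F (E.symm i) q :=
      Equiv.sum_comp E.symm _
    rw [h0]
    simp only [hF]
    rw [Finset.sum_add_distrib, hψsum (fun k => A (E.symm i).1 k) (hrow (E.symm i).1),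
      zero_add]
    apply hcsum
    rw [Fintype.sum_prod_type]
    simp only [cNat_row]
    rw [Finset.sum_const, Finset.card_univ, Fintype.card_fin, smul_eq_mul]
    refine ⟨1 + (E.symm i).2.val, ?_⟩
    generalize (E.symm i).2.val = v
    rw [← hn2]; ring
  · -- columns
    intro j
    have h0 : ∑ i, F (E.symm i) (E.symm j) = ∑ q, F q (E.symm j) :=
      Equiv.sum_comp E.symm (fun q => F q (E.symm j))
    rw [h0]
    simp only [hF]
    rw [Finset.sum_add_distrib, hψsum (fun k => A k (E.symm j).1) (hcol (E.symm j).1),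
      zero_add]
    apply hcsum
    rw [Fintype.sum_prod_type]
    simp only [cNat_col]
    rw [halfSplit, hnhalf, hhalf]
    refine ⟨1 + (E.symm j).2.val, ?_⟩
    generalize (E.symm j).2.val = v
    rw [← hq4]; ring
  · -- diagonal
    have h0 : ∑ i, F (E.symm i) (E.symm i) = ∑ q, F q q :=
      Equiv.sum_comp E.symm (fun q => F q q)
    rw [h0]
    simp only [hF]
    rw [Finset.sum_add_distrib, hψsum (fun k => A k k) hdiag, zero_add]
    apply hcsum
    rw [Fintype.sum_prod_type]
    simp only [cNat_diag]
    rw [halfSplit, hnhalf, hhalf]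
    exact ⟨1, by rw [← hq4]; ring⟩
  · -- antidiagonal
    rw [← Equiv.sum_comp E (fun i => F (E.symm i) (E.symm i.rev))]
    simp only [hrev, Equiv.symm_apply_apply]
    simp only [hF]
    rw [Finset.sum_add_distrib, hψsum (fun k => A k k.rev) hanti, zero_add]
    apply hcsum
    rw [Fintype.sum_prod_type]
    simp only [cNat_anti]
    rw [halfSplit, hnhalf, hhalf]
    exact ⟨2, by rw [← hq4]; ring⟩
end

section
/- For every integer α ≥ 2, there exists a zero-sum (Z_2 ⊕ Z_{2^{2α−1}})-magic square of side 2^α. -/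
open Finset

namespace MagicAux

abbrev Vt (β : ℕ) := ZMod (β+2) → ZMod 2

variable {β : ℕ}

lemma z2_add_self : ∀ a : ZMod 2, a + a = 0 := by decide

lemma z2_aab (a b : ZMod 2) : a + a + b = b := by rw [z2_add_self a, zero_add]

lemma z2_baa (a b : ZMod 2) : b + a + a = b := by rw [add_assoc, z2_add_self a, add_zero]

lemma z2_eq_of_add_eq_zero {a b : ZMod 2} (h : a + b = 0) : a = b := by revert a b; decide

lemma zmod_zero_ne_one : (0 : ZMod (β+2)) ≠ 1 := by
  intro h
  haveI : Fact (1 < β + 2) := ⟨by omega⟩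
  have := congrArg ZMod.val h
  rw [ZMod.val_zero, ZMod.val_one] at this
  exact absurd this (by omega)

lemma zmod_neg_one_ne_zero : (-1 : ZMod (β+2)) ≠ 0 := by
  intro h
  have : (1 : ZMod (β+2)) = 0 := by linear_combination -h
  exact zmod_zero_ne_one this.symm

/-- multiplication by x in F₂[x]/(x^(β+2)+x+1), companion-style. -/
def Tm (v : Vt β) : Vt β := fun k => v (k - 1) + if k = 1 then v (-1) else 0

def Ti (w : Vt β) : Vt β := fun k => w (k + 1) + if k = 0 then w 0 else 0

lemma Tm_add (v w : Vt β) : Tm (v + w) = Tm v + Tm w := by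
  funext k
  simp only [Tm, Pi.add_apply]
  split <;> abel

lemma Ti_Tm (v : Vt β) : Ti (Tm v) = v := by
  funext k
  simp only [Ti, Tm]
  by_cases hk : k = 0
  · subst hk
    rw [if_pos rfl, zero_add, if_pos rfl, if_neg zmod_zero_ne_one, add_zero, sub_self, zero_sub]
    exact z2_baa _ _
  · rw [if_neg hk, add_zero, add_sub_cancel_right]
    by_cases hk1 : k + 1 = 1
    · exact absurd (by linear_combination hk1) hk
    · rw [if_neg hk1, add_zero]

lemma Tm_Ti (w : Vt β) : Tm (Ti w) = w := by
  funext k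
  simp only [Ti, Tm, sub_add_cancel]
  by_cases hk : k = 1
  · subst hk
    rw [if_pos rfl, if_pos (by norm_num : (1:ZMod (β+2)) - 1 = 0), if_neg zmod_neg_one_ne_zero,
      add_zero, neg_add_cancel]
    exact z2_baa _ _
  · have h2 : k - 1 ≠ 0 := fun h => hk (by linear_combination h)
    rw [if_neg hk, if_neg h2, add_zero, add_zero]

lemma Tm_bijective : Function.Bijective (Tm (β := β)) :=
  Function.bijective_iff_has_inverse.2 ⟨Ti, fun v => Ti_Tm v, fun w => Tm_Ti w⟩


lemma Tm_zero : Tm (0 : Vt β) = 0 := by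
  funext k
  simp [Tm]

-- PART2
def Sm (v : Vt β) : Vt β := v + Tm v

lemma Sm_add (v w : Vt β) : Sm (v + w) = Sm v + Sm w := by
  simp only [Sm, Tm_add]; abel

lemma Sm_ker {v : Vt β} (h : Sm v = 0) : v = 0 := by
  haveI : Fact (1 < β + 2) := ⟨by omega⟩
  have hp : ∀ k, v k + (v (k - 1) + if k = 1 then v (-1) else 0) = 0 := by
    intro k; exact congrFun h k
  have h0 : v 0 + v (-1) = 0 := by
    have := hp 0
    rwa [if_neg zmod_zero_ne_one, add_zero, zero_sub] at this
  have hneg : ((β+1 : ℕ) : ZMod (β+2)) = -1 := by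
    have : ((β+2 : ℕ) : ZMod (β+2)) = 0 := ZMod.natCast_self _
    push_cast at this ⊢
    linear_combination this
  have key : ∀ j : ℕ, 1 ≤ j → j ≤ β + 1 → v ((j : ℕ) : ZMod (β+2)) = 0 := by
    intro j
    induction j with
    | zero => intro h1; omega
    | succ j ih =>
      intro h1 h2
      rcases Nat.eq_or_lt_of_le h1 with h1' | h1'
      · -- j + 1 = 1
        have hj : j = 0 := by omega
        subst hj
        have := hp 1
        rw [if_pos rfl, sub_self, h0, add_zero] at this
        simpa using this
      · have hj1 : 1 ≤ j := by omega
        have hlt : j + 1 < β + 2 := by omega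
        set kk : ZMod (β+2) := ((j+1 : ℕ) : ZMod (β+2)) with hkk
        have hne1 : kk ≠ 1 := by
          intro hk1
          have := congrArg ZMod.val hk1
          rw [hkk] at this
          rw [ZMod.val_natCast_of_lt hlt, ZMod.val_one] at this
          omega
        have hsub : kk - 1 = ((j : ℕ) : ZMod (β+2)) := by
          rw [hkk]; push_cast; ring
        have := hp kk
        rw [if_neg hne1, add_zero, hsub, ih hj1 (by omega), add_zero] at this
        exact this
  funext k
  have hk : ((k.val : ℕ) : ZMod (β+2)) = k := ZMod.natCast_rightInverse k
  by_cases hv : k.val = 0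
  · have hk0 : k = 0 := by rwa [ZMod.val_eq_zero] at hv
    subst hk0
    have hv1 : v (-1) = 0 := by
      rw [← hneg]; exact key (β+1) (by omega) (by omega)
    have := z2_eq_of_add_eq_zero h0
    rw [this, hv1]; rfl
  · have hlt := ZMod.val_lt k
    rw [← hk]
    exact key k.val (by omega) (by omega)

lemma Sm_injective : Function.Injective (Sm (β := β)) := by
  intro a b hab
  have h1 : Sm (a - b) = 0 := by
    have h2 := Sm_add (a - b) b
    rw [sub_add_cancel, hab] at h2
    have h3 : (0 : Vt β) + Sm b = Sm (a - b) + Sm b := by rw [zero_add]; exact h2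
    exact (add_right_cancel h3).symm
  have := Sm_ker h1
  exact sub_eq_zero.mp this

lemma Sm_bijective : Function.Bijective (Sm (β := β)) :=
  Finite.injective_iff_bijective.mp Sm_injective

lemma vt_add_self (v : Vt β) : v + v = 0 := by
  funext k; have : ∀ a : ZMod 2, a + a = 0 := by decide
  exact this (v k)

-- PART 3
def pairRev (M : ℕ) : Fin (2*M) ≃ Fin M × ZMod 2 where
  toFun i := if h : (i : ℕ) < M then (⟨i, h⟩, 0)
    else (⟨2*M - 1 - i, by have := i.isLt; omega⟩, 1)
  invFun p := if p.2 = 0 then ⟨p.1, by have := p.1.isLt; omega⟩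
    else ⟨2*M - 1 - p.1, by have := p.1.isLt; omega⟩
  left_inv := by
    intro i
    dsimp only
    by_cases h : (i : ℕ) < M
    · rw [dif_pos h]
      dsimp only
      rw [if_pos rfl]
    · rw [dif_neg h]
      dsimp only
      rw [if_neg (by decide : (1 : ZMod 2) ≠ 0)]
      exact Fin.ext (by have := i.isLt; simp; omega)
  right_inv := by
    rintro ⟨k, ε⟩
    have hε : ε = 0 ∨ ε = 1 := by revert ε; decide
    rcases hε with hε | hε <;> subst hε <;> dsimp only
    · rw [if_pos rfl]
      dsimp only
      rw [dif_pos (by simpa using k.isLt)]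
    · rw [if_neg (by decide : (1 : ZMod 2) ≠ 0)]
      dsimp only
      rw [dif_neg (by simp; have := k.isLt; omega)]
      refine Prod.ext (Fin.ext ?_) rfl
      have := k.isLt; simp; omega

lemma pairRev_rev (M : ℕ) (i : Fin (2*M)) :
    pairRev M i.rev = ((pairRev M i).1, (pairRev M i).2 + 1) := by
  have hrev : (i.rev : ℕ) = 2*M - 1 - (i : ℕ) := by
    rw [Fin.val_rev]; omega
  have hi := i.isLt
  by_cases h : (i : ℕ) < M
  · have h2 : ¬ ((i.rev : ℕ) < M) := by rw [hrev]; omega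
    simp only [pairRev, Equiv.coe_fn_mk, dif_neg h2, dif_pos h]
    refine Prod.ext (Fin.ext ?_) ?_
    · simp [hrev]; omega
    · show (1 : ZMod 2) = 0 + 1
      decide
  · have h2 : (i.rev : ℕ) < M := by rw [hrev]; omega
    simp only [pairRev, Equiv.coe_fn_mk, dif_pos h2, dif_neg h]
    refine Prod.ext (Fin.ext ?_) ?_
    · simp [hrev]; omega
    · show (0 : ZMod 2) = 1 + 1
      decide

def extEquiv (β : ℕ) : (Fin (β+1) → ZMod 2) × ZMod 2 ≃ Vt β where
  toFun p := fun k => if h : k = 0 then p.2 else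
    p.1 ⟨k.val - 1, by
      have h1 := ZMod.val_lt k
      have h2 : k.val ≠ 0 := fun hh => h ((ZMod.val_eq_zero k).mp hh)
      omega⟩ + p.2
  invFun v := (fun t => v ((t.val + 1 : ℕ) : ZMod (β+2)) + v 0, v 0)
  left_inv := by
    rintro ⟨w, ε⟩
    have hc : ∀ t : Fin (β+1), (((t.val + 1 : ℕ)) : ZMod (β+2)) ≠ 0 := by
      intro t hh
      have := congrArg ZMod.val hh
      rw [ZMod.val_natCast_of_lt (by have := t.isLt; omega), ZMod.val_zero] at this
      omega
    refine Prod.ext ?_ ?_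
    · funext t
      dsimp only
      rw [dif_pos rfl, dif_neg (hc t)]
      have hx : (⟨(((t.val + 1 : ℕ)) : ZMod (β+2)).val - 1, by
          have := ZMod.val_lt (((t.val + 1 : ℕ)) : ZMod (β+2)); omega⟩ : Fin (β+1)) = t := by
        refine Fin.ext ?_
        dsimp only
        rw [ZMod.val_natCast_of_lt (by have := t.isLt; omega)]
        simp
      rw [hx]
      exact z2_baa _ _
    · dsimp only
      rw [dif_pos rfl]
  right_inv := by
    intro v
    funext k
    dsimp only
    by_cases h : k = 0
    · subst h; rw [dif_pos rfl]
    · rw [dif_neg h]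
      show v ((k.val - 1 + 1 : ℕ) : ZMod (β+2)) + v 0 + v 0 = v k
      have h2 : k.val ≠ 0 := fun hh => h ((ZMod.val_eq_zero k).mp hh)
      have h3 : k.val - 1 + 1 = k.val := by omega
      rw [h3, ZMod.natCast_rightInverse k]
      exact z2_baa _ _

lemma extEquiv_snd_add (w : Fin (β+1) → ZMod 2) (ε : ZMod 2) :
    extEquiv β (w, ε + 1) = extEquiv β (w, ε) + (fun _ => 1) := by
  funext k
  show (if h : k = 0 then _ else _) = (if h : k = 0 then _ else _) + (1 : ZMod 2)
  by_cases h : k = 0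
  · rw [dif_pos h, dif_pos h]
  · rw [dif_neg h, dif_neg h, add_assoc]

noncomputable def tailEquiv (β : ℕ) : Fin (2^(β+1)) ≃ (Fin (β+1) → ZMod 2) :=
  Fintype.equivOfCardEq (by simp [Fintype.card_fun])

noncomputable def dEq (β : ℕ) : Fin (2^(β+2)) ≃ Vt β :=
  (finCongr (by rw [pow_succ]; ring) : Fin (2^(β+2)) ≃ Fin (2*2^(β+1))).trans
    ((pairRev (2^(β+1))).trans
      (((tailEquiv β).prodCongr (Equiv.refl (ZMod 2))).trans (extEquiv β)))

lemma dEq_rev (i : Fin (2^(β+2))) : dEq β i.rev = dEq β i + (fun _ => 1) := by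
  unfold dEq
  simp only [Equiv.trans_apply, finCongr_apply]
  have hc : ∀ j : Fin (2^(β+2)), Fin.cast (by rw [pow_succ]; ring : 2^(β+2) = 2*2^(β+1)) j.rev
      = (Fin.cast (by rw [pow_succ]; ring : 2^(β+2) = 2*2^(β+1)) j).rev := by
    intro j
    refine Fin.ext ?_
    have hpow : (2:ℕ)^(β+2) = 2*2^(β+1) := by rw [pow_succ]; ring
    simp [Fin.val_rev, hpow]
  rw [hc, pairRev_rev]
  rcases hp : pairRev (2^(β+1)) (Fin.cast (by rw [pow_succ]; ring) i) with ⟨w0, ε0⟩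
  simp only [Equiv.prodCongr_apply, Prod.map, Equiv.refl_apply]
  exact extEquiv_snd_add _ _

-- PART 4
noncomputable def valV (β : ℕ) (v : Vt β) : ℕ := ((dEq β).symm v).val

lemma valV_dEq (i : Fin (2^(β+2))) : valV β (dEq β i) = i.val := by
  simp [valV]

lemma valV_injective {v w : Vt β} (h : valV β v = valV β w) : v = w := by
  have := Fin.val_injective h
  exact (dEq β).symm.injective this

noncomputable def ψ (β : ℕ) (q k : Vt β) : ZMod 2 × ZMod (2^(2*(β+2)-1)) :=
  ((valV β q : ZMod 2),
   ((valV β q / 2 + (if valV β q = 0 then 2^(β+1) else 0) + 2^(β+1) * valV β k : ℕ)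
     : ZMod (2^(2*(β+2)-1))))

noncomputable def Asq (β : ℕ) (i j : Fin (2^(β+2))) : ZMod 2 × ZMod (2^(2*(β+2)-1)) :=
  ψ β (dEq β i + Tm (dEq β j)) (Tm (dEq β i) + dEq β j)

lemma hNeq : (2:ℕ)^(2*(β+2)-1) = 2 * 2^(β+1) * 2^(β+1) := by
  rw [show 2*(β+2)-1 = 1 + ((β+1) + (β+1)) by omega, pow_add, pow_add, pow_one]; ring

lemma hneq : (2:ℕ)^(β+2) = 2 * 2^(β+1) := by
  rw [pow_succ]; ring

/-- Injectivity of the encoding, on the level of natural numbers. -/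
lemma psi_inj_nat {M : ℕ} (hM : 0 < M) {a a' b b' : ℕ}
    (ha : a < 2*M) (ha' : a' < 2*M) (hb : b < 2*M) (hb' : b' < 2*M)
    (h1 : a % 2 = a' % 2)
    (h2 : (a/2 + (if a = 0 then M else 0) + M*b) % (2*M*M)
        = (a'/2 + (if a' = 0 then M else 0) + M*b') % (2*M*M)) :
    a = a' ∧ b = b' := by
  have h2' : Nat.ModEq (2*M*M) (a/2 + (if a = 0 then M else 0) + M*b)
      (a'/2 + (if a' = 0 then M else 0) + M*b') := h2
  have hdvd : M ∣ 2*M*M := ⟨2*M, by ring⟩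
  have h3 : Nat.ModEq M (a/2 + (if a = 0 then M else 0) + M*b)
      (a'/2 + (if a' = 0 then M else 0) + M*b') := h2'.of_dvd hdvd
  have hz : ∀ x y : ℕ, Nat.ModEq M ((if x = 0 then M else 0) + M*y) 0 := by
    intro x y
    refine (Nat.modEq_zero_iff_dvd).mpr ?_
    rcases eq_or_ne x 0 with h | h <;> simp [h] <;> exact ⟨y, rfl⟩
  have key : ∀ x y : ℕ, Nat.ModEq M (x/2 + (if x = 0 then M else 0) + M*y) (x/2) := by
    intro x y
    calc x/2 + (if x = 0 then M else 0) + M*y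
        = x/2 + ((if x = 0 then M else 0) + M*y) := by ring
      _ ≡ x/2 + 0 [MOD M] := Nat.ModEq.add_left _ (hz x y)
      _ = x/2 := by ring
  have h4 : Nat.ModEq M (a/2) (a'/2) := ((key a b).symm.trans h3).trans (key a' b')
  have h5 : a/2 = a'/2 := by
    have e1 : a/2 % M = a/2 := Nat.mod_eq_of_lt (by omega)
    have e2 : a'/2 % M = a'/2 := Nat.mod_eq_of_lt (by omega)
    have := h4
    unfold Nat.ModEq at this
    omega
  have haa : a = a' := by omega
  subst haa
  constructor
  · rfl
  · have h6 : Nat.ModEq (2*M*M) (M*b) (M*b') := Nat.ModEq.add_left_cancel' _ h2'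
    have e1 : M*b % (2*M*M) = M*b := Nat.mod_eq_of_lt (by calc
      M*b < M*(2*M) := by exact mul_lt_mul_of_pos_left hb hM
      _ = 2*M*M := by ring)
    have e2 : M*b' % (2*M*M) = M*b' := Nat.mod_eq_of_lt (by calc
      M*b' < M*(2*M) := by exact mul_lt_mul_of_pos_left hb' hM
      _ = 2*M*M := by ring)
    have h7 : M*b = M*b' := by unfold Nat.ModEq at h6; omega
    exact Nat.eq_of_mul_eq_mul_left hM h7

lemma sum_div2 (M : ℕ) : ∑ c ∈ range (2*M), c/2 = M*(M-1) := by
  induction M with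
  | zero => simp
  | succ M ih =>
    have h : 2*(M+1) = (2*M+1)+1 := by ring
    rw [h, Finset.sum_range_succ, Finset.sum_range_succ, ih]
    have h1 : (2*M)/2 = M := by omega
    have h2 : (2*M+1)/2 = M := by omega
    rw [h1, h2]
    cases M with
    | zero => rfl
    | succ m => simp only [Nat.add_sub_cancel]; ring

lemma sum_line (σ τ : Fin (2^(β+2)) → Vt β)
    (hσ : Function.Bijective σ) (hτ : Function.Bijective τ) :
    ∑ x : Fin (2^(β+2)), ψ β (σ x) (τ x) = 0 := by
  set M := (2:ℕ)^(β+1) with hM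
  have hsplit : ∀ q k : Vt β, ψ β q k
      = ((valV β q : ZMod 2), ((valV β q / 2 + (if valV β q = 0 then M else 0) : ℕ)
          : ZMod (2^(2*(β+2)-1))))
      + ((0 : ZMod 2), ((M * valV β k : ℕ) : ZMod (2^(2*(β+2)-1)))) := by
    intro q k
    unfold ψ
    rw [Prod.mk_add_mk, add_zero, ← Nat.cast_add]
  calc ∑ x : Fin (2^(β+2)), ψ β (σ x) (τ x)
      = (∑ x : Fin (2^(β+2)), ((valV β (σ x) : ZMod 2),
          ((valV β (σ x) / 2 + (if valV β (σ x) = 0 then M else 0) : ℕ)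
            : ZMod (2^(2*(β+2)-1)))))
      + (∑ x : Fin (2^(β+2)), ((0 : ZMod 2),
          ((M * valV β (τ x) : ℕ) : ZMod (2^(2*(β+2)-1))))) := by
        rw [← Finset.sum_add_distrib]
        exact Finset.sum_congr rfl fun x _ => hsplit (σ x) (τ x)
    _ = (∑ v : Vt β, ((valV β v : ZMod 2),
          ((valV β v / 2 + (if valV β v = 0 then M else 0) : ℕ)
            : ZMod (2^(2*(β+2)-1)))))
      + (∑ v : Vt β, ((0 : ZMod 2),
          ((M * valV β v : ℕ) : ZMod (2^(2*(β+2)-1))))) := by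
        rw [Function.Bijective.sum_comp hσ (fun v => ((valV β v : ZMod 2),
          ((valV β v / 2 + (if valV β v = 0 then M else 0) : ℕ) : ZMod (2^(2*(β+2)-1))))),
          Function.Bijective.sum_comp hτ (fun v => ((0 : ZMod 2),
          ((M * valV β v : ℕ) : ZMod (2^(2*(β+2)-1)))))]
    _ = (∑ i : Fin (2^(β+2)), (((i : ℕ) : ZMod 2),
          (((i : ℕ) / 2 + (if (i : ℕ) = 0 then M else 0) : ℕ)
            : ZMod (2^(2*(β+2)-1)))))
      + (∑ i : Fin (2^(β+2)), ((0 : ZMod 2),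
          ((M * (i : ℕ) : ℕ) : ZMod (2^(2*(β+2)-1))))) := by
        rw [← Equiv.sum_comp (dEq β) (fun v => ((valV β v : ZMod 2),
          ((valV β v / 2 + (if valV β v = 0 then M else 0) : ℕ) : ZMod (2^(2*(β+2)-1))))),
          ← Equiv.sum_comp (dEq β) (fun v => ((0 : ZMod 2),
          ((M * valV β v : ℕ) : ZMod (2^(2*(β+2)-1)))))]
        simp only [valV_dEq]
    _ = 0 := by
        rw [← Finset.sum_add_distrib]
        have hterm : ∀ i : Fin (2^(β+2)),
            ((((i : ℕ) : ZMod 2),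
              (((i : ℕ) / 2 + (if (i : ℕ) = 0 then M else 0) : ℕ) : ZMod (2^(2*(β+2)-1))))
            + ((0 : ZMod 2), ((M * (i : ℕ) : ℕ) : ZMod (2^(2*(β+2)-1)))))
            = ((((i : ℕ) : ZMod 2),
              (((i : ℕ) / 2 + (if (i : ℕ) = 0 then M else 0) + M * (i : ℕ) : ℕ)
                : ZMod (2^(2*(β+2)-1))))) := by
          intro i
          rw [Prod.mk_add_mk, add_zero, ← Nat.cast_add]
        rw [Finset.sum_congr rfl fun i _ => hterm i]
        -- now a single sum of pairs; compute componentwise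
        have hfst : (∑ i : Fin (2^(β+2)), ((((i : ℕ) : ZMod 2),
              (((i : ℕ) / 2 + (if (i : ℕ) = 0 then M else 0) + M * (i : ℕ) : ℕ)
                : ZMod (2^(2*(β+2)-1)))))).1 = 0 := by
          rw [Prod.fst_sum]
          rw [← Nat.cast_sum]
          rw [ZMod.natCast_eq_zero_iff]
          rw [Fin.sum_univ_eq_sum_range (fun c => c)]
          have hmul := Finset.sum_range_id_mul_two (2^(β+2))
          have hpow : (2:ℕ)^(β+2) = 2^β * 4 := by
            rw [show β+2 = β + 2 from rfl, pow_add]; norm_num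
          have key2 : (∑ i ∈ range (2^(β+2)), i) = 2 * (2^β * (2^(β+2) - 1)) := by
            refine Nat.eq_of_mul_eq_mul_right (m := 2) (by norm_num) ?_
            rw [hmul, hpow]; ring
          exact ⟨_, key2⟩
        have hsnd : (∑ i : Fin (2^(β+2)), ((((i : ℕ) : ZMod 2),
              (((i : ℕ) / 2 + (if (i : ℕ) = 0 then M else 0) + M * (i : ℕ) : ℕ)
                : ZMod (2^(2*(β+2)-1)))))).2 = 0 := by
          rw [Prod.snd_sum]
          rw [← Nat.cast_sum]
          rw [ZMod.natCast_eq_zero_iff]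
          -- compute the natural number sum
          have e1 : ∑ i : Fin (2^(β+2)), ((i : ℕ) / 2 + (if (i : ℕ) = 0 then M else 0) + M * (i : ℕ))
              = (∑ i : Fin (2^(β+2)), (i : ℕ)/2) + (∑ i : Fin (2^(β+2)), (if (i : ℕ) = 0 then M else 0))
                + M * (∑ i : Fin (2^(β+2)), (i : ℕ)) := by
            rw [Finset.mul_sum, ← Finset.sum_add_distrib, ← Finset.sum_add_distrib]
          rw [e1]
          have e2 : (∑ i : Fin (2^(β+2)), (i : ℕ)/2) = M*(M-1) := by
            rw [Fin.sum_univ_eq_sum_range (fun c => c/2), hneq, sum_div2]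
          have e3 : (∑ i : Fin (2^(β+2)), (if (i : ℕ) = 0 then M else 0)) = M := by
            rw [Fin.sum_univ_eq_sum_range (fun c => if c = 0 then M else 0)]
            rw [Finset.sum_ite_eq' (range (2^(β+2))) 0 (fun _ => M)]
            rw [if_pos (Finset.mem_range.mpr (by positivity))]
          have e4 : (∑ i : Fin (2^(β+2)), (i : ℕ)) = M * (2*M - 1) := by
            rw [Fin.sum_univ_eq_sum_range (fun c => c)]
            have hmul := Finset.sum_range_id_mul_two (2^(β+2))
            rw [hneq] at hmul
            rw [hneq]
            refine Nat.eq_of_mul_eq_mul_right (m := 2) (by norm_num) ?_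
            rw [hmul]; ring
          rw [e2, e3, e4]
          have hM1 : 0 < M := by positivity
          have hsub1 : M*(M-1) + M = M*M := by
            have : M - 1 + 1 = M := by omega
            calc M*(M-1) + M = M*((M-1)+1) := by ring
              _ = M*M := by rw [this]
          have hsub2 : M*M + M*(M*(2*M-1)) = 2*M*M*M := by
            have h1 : 2*M - 1 + 1 = 2*M := by omega
            calc M*M + M*(M*(2*M-1)) = M*M*((2*M-1)+1) := by ring
              _ = M*M*(2*M) := by rw [h1]
              _ = 2*M*M*M := by ring
          refine ⟨M, ?_⟩
          rw [hNeq]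
          calc M*(M-1) + M + M*(M*(2*M-1)) = M*M + M*(M*(2*M-1)) := by rw [hsub1]
            _ = 2*M*M*M := hsub2
            _ = 2*2^(β+1)*2^(β+1)*M := by rw [hM]
        exact Prod.ext hfst hsnd

-- PART 5
lemma vt_sub_eq_add (v w : Vt β) : v - w = v + w := by
  rw [sub_eq_add_neg, neg_eq_of_add_eq_zero_right (vt_add_self w)]

lemma Tm_sub (v w : Vt β) : Tm (v - w) = Tm v - Tm w := by
  rw [vt_sub_eq_add, vt_sub_eq_add, Tm_add]

lemma valV_lt (v : Vt β) : valV β v < 2 * 2^(β+1) := by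
  rw [← hneq]; exact ((dEq β).symm v).isLt

lemma Asq_injective : Function.Injective
    (fun p : Fin (2^(β+2)) × Fin (2^(β+2)) => Asq β p.1 p.2) := by
  rintro ⟨i, j⟩ ⟨i', j'⟩ h
  set q := dEq β i + Tm (dEq β j) with hq
  set k := Tm (dEq β i) + dEq β j with hk
  set q' := dEq β i' + Tm (dEq β j') with hq'
  set k' := Tm (dEq β i') + dEq β j' with hk'
  have h1 : (valV β q : ZMod 2) = (valV β q' : ZMod 2) := congrArg Prod.fst h
  have h2 : ((valV β q / 2 + (if valV β q = 0 then 2^(β+1) else 0) + 2^(β+1) * valV β k : ℕ)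
      : ZMod (2^(2*(β+2)-1)))
      = ((valV β q' / 2 + (if valV β q' = 0 then 2^(β+1) else 0) + 2^(β+1) * valV β k' : ℕ)
      : ZMod (2^(2*(β+2)-1))) := congrArg Prod.snd h
  have h1' : valV β q % 2 = valV β q' % 2 := (ZMod.natCast_eq_natCast_iff' _ _ _).mp h1
  have h2' := (ZMod.natCast_eq_natCast_iff' _ _ _).mp h2
  rw [hNeq] at h2'
  have hM : (0:ℕ) < 2^(β+1) := by positivity
  obtain ⟨hqq, hkk⟩ := psi_inj_nat hM (valV_lt q) (valV_lt q') (valV_lt k) (valV_lt k') h1' h2'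
  have hQ : q = q' := valV_injective hqq
  have hK : k = k' := valV_injective hkk
  -- linear algebra over the char-2 group
  have f1 : dEq β i - dEq β i' = Tm (dEq β j' - dEq β j) := by
    rw [Tm_sub, sub_eq_sub_iff_add_eq_add]
    rw [hq, hq'] at hQ
    rw [hQ]; exact add_comm _ _
  have f2 : Tm (dEq β i - dEq β i') = dEq β j' - dEq β j := by
    rw [Tm_sub, sub_eq_sub_iff_add_eq_add]
    rw [hk, hk'] at hK
    rw [hK]; exact add_comm _ _
  have f3 : dEq β i - dEq β i' = Tm (Tm (dEq β i - dEq β i')) := by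
    rw [f2]; exact f1
  have f4 : Sm (Sm (dEq β i - dEq β i')) = 0 := by
    have expand : Sm (Sm (dEq β i - dEq β i'))
        = (dEq β i - dEq β i') + Tm (Tm (dEq β i - dEq β i'))
          + (Tm (dEq β i - dEq β i') + Tm (dEq β i - dEq β i')) := by
      simp only [Sm, Tm_add]; abel
    rw [expand, vt_add_self, add_zero, ← f3, vt_add_self]
  have hu : dEq β i - dEq β i' = 0 := Sm_ker (Sm_ker f4)
  have hw : dEq β j' - dEq β j = 0 := by rw [← f2, hu, Tm_zero]
  have hi : i = i' := (dEq β).injective (sub_eq_zero.mp hu)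
  have hj : j' = j := (dEq β).injective (sub_eq_zero.mp hw)
  simp [hi, hj]

lemma Asq_bijective : Function.Bijective
    (fun p : Fin (2^(β+2)) × Fin (2^(β+2)) => Asq β p.1 p.2) := by
  haveI : NeZero ((2:ℕ)^(2*(β+2)-1)) := ⟨pow_ne_zero _ (by norm_num)⟩
  rw [Fintype.bijective_iff_injective_and_card]
  refine ⟨Asq_injective, ?_⟩
  rw [Fintype.card_prod, Fintype.card_prod, Fintype.card_fin, ZMod.card, ZMod.card,
    ← pow_add, show (β+2)+(β+2) = 1 + (2*(β+2)-1) by omega, pow_add, pow_one]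

lemma allOne_eq_dEq_rev_sub (x : Fin (2^(β+2))) :
    dEq β x.rev = dEq β x + (fun _ => (1 : ZMod 2)) := dEq_rev x

theorem Asq_magic : IsZeroSumMagicSquare (Asq β) := by
  refine ⟨Asq_bijective, ?_, ?_, ?_, ?_⟩
  · intro i
    exact sum_line (fun j => dEq β i + Tm (dEq β j)) (fun j => Tm (dEq β i) + dEq β j)
      ((Equiv.addLeft (dEq β i)).bijective.comp (Tm_bijective.comp (dEq β).bijective))
      ((Equiv.addLeft (Tm (dEq β i))).bijective.comp (dEq β).bijective)
  · intro j
    exact sum_line (fun i => dEq β i + Tm (dEq β j)) (fun i => Tm (dEq β i) + dEq β j)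
      ((Equiv.addRight (Tm (dEq β j))).bijective.comp (dEq β).bijective)
      ((Equiv.addRight (dEq β j)).bijective.comp (Tm_bijective.comp (dEq β).bijective))
  · have hterm : ∀ x : Fin (2^(β+2)), Asq β x x
        = ψ β (Sm (dEq β x)) (Sm (dEq β x)) := by
      intro x
      unfold Asq
      congr 1
      exact add_comm _ _
    rw [Finset.sum_congr rfl fun x _ => hterm x]
    exact sum_line (fun x => Sm (dEq β x)) (fun x => Sm (dEq β x))
      (Sm_bijective.comp (dEq β).bijective) (Sm_bijective.comp (dEq β).bijective)
  · have hterm : ∀ x : Fin (2^(β+2)), Asq β x x.rev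
        = ψ β (Sm (dEq β x) + Tm (fun _ => 1)) (Sm (dEq β x) + (fun _ => 1)) := by
      intro x
      unfold Asq
      rw [dEq_rev x, Tm_add]
      congr 1
      · simp only [Sm]; abel
      · simp only [Sm]; abel
    rw [Finset.sum_congr rfl fun x _ => hterm x]
    exact sum_line (fun x => Sm (dEq β x) + Tm (fun _ => 1))
      (fun x => Sm (dEq β x) + (fun _ => 1))
      ((Equiv.addRight (Tm (fun _ => 1))).bijective.comp (Sm_bijective.comp (dEq β).bijective))
      ((Equiv.addRight ((fun _ => 1) : Vt β)).bijective.comp (Sm_bijective.comp (dEq β).bijective))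

end MagicAux

theorem exists_zero_sum_magic_square_Z2_Z2pow (α : ℕ) (hα : 2 ≤ α) :
    ∃ A : Fin (2 ^ α) → Fin (2 ^ α) → ZMod 2 × ZMod (2 ^ (2 * α - 1)),
      IsZeroSumMagicSquare A := by
  obtain ⟨β, rfl⟩ : ∃ β, α = β + 2 := ⟨α - 2, by omega⟩
  exact ⟨MagicAux.Asq β, MagicAux.Asq_magic⟩
end

section
/- For every integer α ≥ 2 and every Abelian group H of order 4 (i.e., H ≅ Z_4 or H ≅ Z_2 ⊕ Z_2), there exists a zero-sum (H ⊕ Z_{2^{2α−2}})-magic square of side 2^α. -/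
open Finset

/-! ### Auxiliary material -/

section Aux

lemma MagicAux.sum_two_mul_add_one (c : ℕ) : ∑ i ∈ range c, (2*i+1) = c * c := by
  induction c with
  | zero => simp
  | succ m ih => rw [Finset.sum_range_succ, ih]; ring

lemma MagicAux.sum_odd_mod (c : ℕ) :
    ∑ i ∈ range (2*c), ((2*i+1) % (2*c)) = 2*(c*c) := by
  rcases Nat.eq_zero_or_pos c with rfl | hc
  · simp
  have hsplit := Finset.sum_Ico_consecutive (fun i => (2*i+1) % (2*c))
      (Nat.zero_le c) (by omega : c ≤ 2*c)
  rw [← Finset.range_eq_Ico] at hsplit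
  rw [← Finset.range_eq_Ico] at hsplit
  have h1 : ∑ i ∈ Finset.range c, ((2*i+1) % (2*c)) = c * c := by
    rw [Finset.sum_congr rfl (fun i hi => by
      rw [Nat.mod_eq_of_lt (by simp only [Finset.mem_range] at hi; omega)])]
    exact MagicAux.sum_two_mul_add_one c
  have h2 : ∑ i ∈ Finset.Ico c (2*c), ((2*i+1) % (2*c)) = c * c := by
    rw [Finset.sum_Ico_eq_sum_range]
    rw [Finset.sum_congr rfl (fun i hi => by
      simp only [Finset.mem_range] at hi
      rw [show 2*(c+i)+1 = (2*i+1) + (2*c) by ring, Nat.add_mod_right,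
        Nat.mod_eq_of_lt (by omega)])]
    rw [show 2*c - c = c by omega]
    exact MagicAux.sum_two_mul_add_one c
  omega

/-- The index equivalence `Fin (k*2) ≃ Fin k × Fin 2`. -/
def MagicAux.dEquiv (k : ℕ) : Fin (k*2) ≃ Fin k × Fin 2 where
  toFun i := (⟨i.val / 2, by have := i.isLt; omega⟩, ⟨i.val % 2, by omega⟩)
  invFun p := ⟨2 * p.1.val + p.2.val, by have := p.1.isLt; have := p.2.isLt; omega⟩
  left_inv i := by
    apply Fin.ext
    show 2 * (i.val / 2) + i.val % 2 = i.val
    omega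
  right_inv p := by
    rcases p with ⟨I, a⟩
    have hI := I.isLt
    have ha := a.isLt
    simp only [Prod.ext_iff, Fin.ext_iff]
    constructor
    · show (2 * I.val + a.val) / 2 = I.val; omega
    · show (2 * I.val + a.val) % 2 = a.val; omega

lemma MagicAux.dEquiv_symm_rev (k : ℕ) (I : Fin k) (a : Fin 2) :
    ((MagicAux.dEquiv k).symm (I, a)).rev = (MagicAux.dEquiv k).symm (I.rev, a.rev) := by
  have hI := I.isLt
  have ha := a.isLt
  apply Fin.ext
  rw [Fin.val_rev]
  show k*2 - (2 * I.val + a.val + 1) = 2 * I.rev.val + a.rev.val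
  rw [Fin.val_rev, Fin.val_rev]
  omega

/-- The `ZMod (k^2)` part of the construction. -/
def MagicAux.bb (k : ℕ) (I J : Fin k) : ZMod (k^2) :=
  ((k * I.val + ((I.val + J.val + 1) % k) : ℕ) : ZMod (k^2))

lemma MagicAux.bb_nat_lt (k : ℕ) (hk0 : 0 < k) (I J : Fin k) :
    k * I.val + ((I.val + J.val + 1) % k) < k^2 := by
  have h1 := I.isLt
  have h2 := Nat.mod_lt (I.val + J.val + 1) hk0
  have h3 : k * (I.val + 1) ≤ k * k := Nat.mul_le_mul_left k h1
  have h4 : k * k = k^2 := (sq k).symm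
  nlinarith [h3]

lemma MagicAux.bb_inj (k : ℕ) (hk0 : 0 < k) {I J I' J' : Fin k}
    (h : MagicAux.bb k I J = MagicAux.bb k I' J') : I = I' ∧ J = J' := by
  haveI : NeZero (k^2) := ⟨pow_ne_zero 2 hk0.ne'⟩
  have hn : k * I.val + ((I.val + J.val + 1) % k)
      = k * I'.val + ((I'.val + J'.val + 1) % k) := by
    have hv := congrArg ZMod.val h
    rwa [MagicAux.bb, MagicAux.bb, ZMod.val_cast_of_lt (MagicAux.bb_nat_lt k hk0 I J),
      ZMod.val_cast_of_lt (MagicAux.bb_nat_lt k hk0 I' J')] at hv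
  have hI : I.val = I'.val := by
    have hd := congrArg (· / k) hn
    simp only [Nat.mul_add_div hk0,
      Nat.div_eq_of_lt (Nat.mod_lt _ hk0), Nat.add_zero] at hd
    exact hd
  have hr : (I.val + J.val + 1) % k = (I.val + J'.val + 1) % k := by
    rw [hI] at hn
    have := Nat.add_left_cancel hn
    rw [hI]
    exact this
  have hJ : J.val = J'.val := by
    have hm : (J.val + (I.val + 1)) % k = (J'.val + (I.val + 1)) % k := by
      rw [show J.val + (I.val+1) = I.val + J.val + 1 by omega,
          show J'.val + (I.val+1) = I.val + J'.val + 1 by omega]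
      exact hr
    have hmc := Nat.ModEq.add_right_cancel' (I.val+1) hm
    rwa [Nat.ModEq, Nat.mod_eq_of_lt J.isLt, Nat.mod_eq_of_lt J'.isLt] at hmc
  exact ⟨Fin.ext hI, Fin.ext hJ⟩

lemma MagicAux.bb_diag (k : ℕ) (hk2 : 2 ∣ k) :
    ∑ I : Fin k, (MagicAux.bb k I I + MagicAux.bb k I I) = 0 := by
  have hcast : ∑ I : Fin k, (MagicAux.bb k I I + MagicAux.bb k I I)
      = ((∑ i ∈ range k, ((k*i + ((i+i+1)%k)) + (k*i + ((i+i+1)%k))) : ℕ) : ZMod (k^2)) := by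
    rw [Nat.cast_sum]
    rw [← Fin.sum_univ_eq_sum_range
      (fun i => (((k*i + ((i+i+1)%k)) + (k*i + ((i+i+1)%k)) : ℕ) : ZMod (k^2))) k]
    exact Finset.sum_congr rfl (fun I _ => by unfold MagicAux.bb; push_cast; ring)
  rw [hcast, ZMod.natCast_eq_zero_iff]
  obtain ⟨c, rfl⟩ := hk2
  have e1 : ∀ i ∈ range (2*c),
      ((2*c)*i + ((i+i+1)%(2*c)) + ((2*c)*i + ((i+i+1)%(2*c))))
        = 2*((2*c)*i) + 2*((2*i+1)%(2*c)) := by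
    intro i _
    rw [show i+i+1 = 2*i+1 by ring]
    ring
  rw [Finset.sum_congr rfl e1, Finset.sum_add_distrib, ← Finset.mul_sum, ← Finset.mul_sum,
    ← Finset.mul_sum, MagicAux.sum_odd_mod c]
  have hg := Finset.sum_range_id_mul_two (2*c)
  set T := ∑ i ∈ range (2*c), i with hT
  refine ⟨2*c, ?_⟩
  rcases Nat.eq_zero_or_pos c with rfl | hc
  · simp [hT]
  rw [show 2*c - 1 = 2*(c-1)+1 by omega] at hg
  have h5 : 2 * ((2*c) * T) = (2*c) * (T * 2) := by ring
  rw [h5, hg]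
  cases c with
  | zero => omega
  | succ m => simp only [Nat.succ_sub_one]; ring

lemma MagicAux.bb_anti (k : ℕ) (hk0 : 0 < k) :
    ∑ I : Fin k, (MagicAux.bb k I I.rev + MagicAux.bb k I I.rev) = 0 := by
  have hb : ∀ I : Fin k, MagicAux.bb k I I.rev = ((k * I.val : ℕ) : ZMod (k^2)) := by
    intro I
    have hI := I.isLt
    unfold MagicAux.bb
    congr 1
    rw [Fin.val_rev, show I.val + (k - (I.val+1)) + 1 = k by omega, Nat.mod_self, add_zero]
  rw [Finset.sum_congr rfl (fun I _ => by rw [hb I])]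
  have hcast : ∑ I : Fin k, (((k * I.val : ℕ) : ZMod (k^2)) + ((k * I.val : ℕ) : ZMod (k^2)))
      = ((∑ i ∈ range k, (k*i + k*i) : ℕ) : ZMod (k^2)) := by
    rw [Nat.cast_sum]
    rw [← Fin.sum_univ_eq_sum_range (fun i => ((k*i + k*i : ℕ) : ZMod (k^2))) k]
    push_cast
    rfl
  rw [hcast, ZMod.natCast_eq_zero_iff]
  have hg := Finset.sum_range_id_mul_two k
  have e1 : ∀ i ∈ range k, (k*i + k*i) = 2*(k*i) := by intro i _; ring
  rw [Finset.sum_congr rfl e1, ← Finset.mul_sum, ← Finset.mul_sum]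
  refine ⟨k - 1, ?_⟩
  have h5 : 2 * (k * (∑ i ∈ range k, i)) = k * ((∑ i ∈ range k, i) * 2) := by ring
  rw [h5, hg]
  cases k with
  | zero => simp
  | succ m => simp only [Nat.succ_sub_one]; ring

/-- The combined square on the product index. -/
def MagicAux.Asq_s10 {H : Type*} [AddCommGroup H] (k : ℕ) (e2 : Fin 2 × Fin 2 ≃ H) :
    (Fin k × Fin 2) → (Fin k × Fin 2) → H × ZMod (k^2) :=
  fun p q => (e2 (p.2, q.2),
    if p.2 = q.2 then MagicAux.bb k p.1 q.1 else - MagicAux.bb k p.1 q.1)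

end Aux

lemma MagicAux.main {H : Type*} [AddCommGroup H] [Fintype H] (hH : Fintype.card H = 4)
    (k : ℕ) (hk0 : 0 < k) (hk4 : 4 ∣ k) :
    ∃ A : Fin (k*2) → Fin (k*2) → H × ZMod (k^2), IsZeroSumMagicSquare A := by
  haveI : NeZero (k^2) := ⟨pow_ne_zero 2 hk0.ne'⟩
  obtain ⟨e2⟩ : Nonempty (Fin 2 × Fin 2 ≃ H) :=
    ⟨Fintype.equivOfCardEq (by simp [hH])⟩
  have hH4 : ∀ x : H, k • x = 0 := by
    intro x
    obtain ⟨c, rfl⟩ := hk4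
    rw [mul_nsmul]
    have h4 : (4 : ℕ) • x = 0 := by rw [← hH]; exact card_nsmul_eq_zero
    rw [h4, smul_zero]
  have hk2 : 2 ∣ k := dvd_trans (by norm_num) hk4
  set d := MagicAux.dEquiv k with hd
  refine ⟨fun i j => MagicAux.Asq_s10 k e2 (d i) (d j), ?_, ?_, ?_, ?_, ?_⟩
  · -- bijectivity
    have key : Function.Bijective
        (fun p : (Fin k × Fin 2) × (Fin k × Fin 2) => MagicAux.Asq_s10 k e2 p.1 p.2) := by
      rw [Fintype.bijective_iff_injective_and_card]
      constructor
      · rintro ⟨⟨I,a⟩,⟨J,b⟩⟩ ⟨⟨I',a'⟩,⟨J',b'⟩⟩ h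
        simp only [MagicAux.Asq_s10, Prod.mk.injEq] at h
        obtain ⟨h1, h2⟩ := h
        have hab := e2.injective h1
        rw [Prod.mk.injEq] at hab
        obtain ⟨rfl, rfl⟩ := hab
        have hbbeq : MagicAux.bb k I J = MagicAux.bb k I' J' := by
          by_cases hab2 : a = b
          · simpa [hab2] using h2
          · simp only [if_neg hab2] at h2
            exact neg_inj.mp h2
        obtain ⟨hII, hJJ⟩ := MagicAux.bb_inj k hk0 hbbeq
        subst hII; subst hJJ
        rfl
      · simp only [Fintype.card_prod, Fintype.card_fin, ZMod.card, hH]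
        ring
    have : (fun p : Fin (k*2) × Fin (k*2) => MagicAux.Asq_s10 k e2 (d p.1) (d p.2))
        = (fun p : (Fin k × Fin 2) × (Fin k × Fin 2) => MagicAux.Asq_s10 k e2 p.1 p.2)
          ∘ (Equiv.prodCongr d d) := rfl
    rw [this]
    exact key.comp (Equiv.prodCongr d d).bijective
  · -- rows
    intro i
    rw [Equiv.sum_comp d (fun q => MagicAux.Asq_s10 k e2 (d i) q)]
    rcases hdi : d i with ⟨I, a⟩
    rw [Fintype.sum_prod_type]
    refine Prod.ext ?_ ?_
    · rw [Prod.fst_sum]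
      rw [Finset.sum_congr rfl (fun J _ => Prod.fst_sum)]
      simp only [MagicAux.Asq_s10]
      rw [Finset.sum_congr rfl (fun J _ => Fin.sum_univ_two (fun b => e2 (a, b)))]
      rw [Finset.sum_const, Finset.card_univ, Fintype.card_fin]
      exact hH4 _
    · rw [Prod.snd_sum]
      rw [Finset.sum_congr rfl (fun J _ => Prod.snd_sum)]
      simp only [MagicAux.Asq_s10]
      have hz : ∀ J : Fin k,
          (∑ b : Fin 2, if a = b then MagicAux.bb k I J else - MagicAux.bb k I J) = 0 := by
        intro J
        rw [Fin.sum_univ_two]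
        fin_cases a <;> simp
      rw [Finset.sum_congr rfl (fun J _ => hz J), Finset.sum_const, smul_zero]
      rfl
  · -- columns
    intro j
    rw [Equiv.sum_comp d (fun p => MagicAux.Asq_s10 k e2 p (d j))]
    rcases hdj : d j with ⟨J, b⟩
    rw [Fintype.sum_prod_type]
    refine Prod.ext ?_ ?_
    · rw [Prod.fst_sum]
      rw [Finset.sum_congr rfl (fun I _ => Prod.fst_sum)]
      simp only [MagicAux.Asq_s10]
      rw [Finset.sum_congr rfl (fun I _ => Fin.sum_univ_two (fun a => e2 (a, b)))]
      rw [Finset.sum_const, Finset.card_univ, Fintype.card_fin]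
      exact hH4 _
    · rw [Prod.snd_sum]
      rw [Finset.sum_congr rfl (fun I _ => Prod.snd_sum)]
      simp only [MagicAux.Asq_s10]
      have hz : ∀ I : Fin k,
          (∑ a : Fin 2, if a = b then MagicAux.bb k I J else - MagicAux.bb k I J) = 0 := by
        intro I
        rw [Fin.sum_univ_two]
        fin_cases b <;> simp
      rw [Finset.sum_congr rfl (fun I _ => hz I), Finset.sum_const, smul_zero]
      rfl
  · -- diagonal
    rw [Equiv.sum_comp d (fun p => MagicAux.Asq_s10 k e2 p p)]
    rw [Fintype.sum_prod_type]
    refine Prod.ext ?_ ?_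
    · rw [Prod.fst_sum]
      rw [Finset.sum_congr rfl (fun I _ => Prod.fst_sum)]
      simp only [MagicAux.Asq_s10]
      rw [Finset.sum_congr rfl (fun I _ => Fin.sum_univ_two (fun a => e2 (a, a)))]
      rw [Finset.sum_const, Finset.card_univ, Fintype.card_fin]
      exact hH4 _
    · rw [Prod.snd_sum]
      rw [Finset.sum_congr rfl (fun I _ => Prod.snd_sum)]
      simp only [MagicAux.Asq_s10, eq_self_iff_true, if_true]
      rw [Finset.sum_congr rfl (fun I _ => Fin.sum_univ_two (fun _ => MagicAux.bb k I I))]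
      rw [MagicAux.bb_diag k hk2]
      rfl
  · -- antidiagonal
    rw [← Equiv.sum_comp d.symm (fun i => MagicAux.Asq_s10 k e2 (d i) (d i.rev))]
    have hterm : ∀ p : Fin k × Fin 2,
        MagicAux.Asq_s10 k e2 (d (d.symm p)) (d ((d.symm p).rev))
          = MagicAux.Asq_s10 k e2 p (p.1.rev, p.2.rev) := by
      rintro ⟨I, a⟩
      rw [show ((d.symm (I, a)).rev) = d.symm (I.rev, a.rev) from
        MagicAux.dEquiv_symm_rev k I a]
      rw [Equiv.apply_symm_apply, Equiv.apply_symm_apply]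
    rw [Finset.sum_congr rfl (fun p _ => hterm p)]
    rw [Fintype.sum_prod_type]
    refine Prod.ext ?_ ?_
    · rw [Prod.fst_sum]
      rw [Finset.sum_congr rfl (fun I _ => Prod.fst_sum)]
      simp only [MagicAux.Asq_s10]
      rw [Finset.sum_congr rfl (fun I _ => Fin.sum_univ_two (fun a => e2 (a, a.rev)))]
      rw [Finset.sum_const, Finset.card_univ, Fintype.card_fin]
      exact hH4 _
    · rw [Prod.snd_sum]
      rw [Finset.sum_congr rfl (fun I _ => Prod.snd_sum)]
      simp only [MagicAux.Asq_s10]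
      have hz : ∀ I : Fin k,
          (∑ a : Fin 2, if a = a.rev then MagicAux.bb k I I.rev else - MagicAux.bb k I I.rev)
            = -(MagicAux.bb k I I.rev + MagicAux.bb k I I.rev) := by
        intro I
        rw [Fin.sum_univ_two]
        rw [if_neg (by decide : ¬ (0 : Fin 2) = Fin.rev 0),
            if_neg (by decide : ¬ (1 : Fin 2) = Fin.rev 1)]
        rw [neg_add]
      rw [Finset.sum_congr rfl (fun I _ => hz I)]
      rw [Finset.sum_neg_distrib, MagicAux.bb_anti k hk0, neg_zero]
      rfl

lemma MagicAux.map {Γ : Type*} {Γ' : Type*} [AddCommGroup Γ] [AddCommGroup Γ'] {n : ℕ}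
    (e : Γ ≃+ Γ') {A : Fin n → Fin n → Γ} (h : IsZeroSumMagicSquare A) :
    IsZeroSumMagicSquare (fun i j => e (A i j)) := by
  obtain ⟨hb, hr, hc, hdg, ha⟩ := h
  refine ⟨?_, fun i => ?_, fun j => ?_, ?_, ?_⟩
  · exact e.bijective.comp hb
  · rw [← map_sum, hr i, map_zero]
  · rw [← map_sum, hc j, map_zero]
  · rw [← map_sum, hdg, map_zero]
  · rw [← map_sum, ha, map_zero]

def MagicAux.M1 : Fin 4 → Fin 4 → ZMod 4 × ZMod 4 :=
  ![![(0,0),(0,1),(1,0),(3,3)], ![(0,2),(0,3),(1,2),(3,1)],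
    ![(2,0),(2,1),(3,0),(1,3)], ![(2,2),(2,3),(3,2),(1,1)]]

def MagicAux.M2 : Fin 4 → Fin 4 → (ZMod 2 × ZMod 2) × ZMod 4 :=
  ![![((0,0),0),((0,0),1),((0,1),0),((0,1),3)], ![((0,0),2),((0,0),3),((0,1),2),((0,1),1)],
    ![((1,0),0),((1,0),1),((1,1),0),((1,1),3)], ![((1,0),2),((1,0),3),((1,1),2),((1,1),1)]]

lemma MagicAux.hM1 : IsZeroSumMagicSquare MagicAux.M1 := by
  unfold IsZeroSumMagicSquare; decide

lemma MagicAux.hM2 : IsZeroSumMagicSquare MagicAux.M2 := by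
  unfold IsZeroSumMagicSquare; decide

lemma MagicAux.classify {H : Type*} [AddCommGroup H] [Fintype H]
    (hH : Fintype.card H = 4) :
    Nonempty (ZMod 4 ≃+ H) ∨ Nonempty ((ZMod 2 × ZMod 2) ≃+ H) := by
  classical
  have h4 : ∀ x : H, (4 : ℕ) • x = 0 := by
    intro x; rw [← hH]; exact card_nsmul_eq_zero
  by_cases hv : ∃ v : H, (2 : ℕ) • v ≠ 0
  · left
    obtain ⟨v, hv2⟩ := hv
    have hv0 : v ≠ 0 := by rintro rfl; simp at hv2
    have hz4 : ((zmultiplesHom H) v) ((4 : ℕ) : ℤ) = 0 := by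
      simp only [zmultiplesHom_apply, natCast_zsmul]
      exact h4 v
    set φ : ZMod 4 →+ H := ZMod.lift 4 ⟨(zmultiplesHom H) v, by exact_mod_cast hz4⟩ with hφ
    have hφval : ∀ m : ℕ, φ ((m : ℕ) : ZMod 4) = m • v := by
      intro m
      have : ((m : ℕ) : ZMod 4) = ((m : ℤ) : ZMod 4) := by push_cast; rfl
      rw [this, hφ, ZMod.lift_coe]
      simp [natCast_zsmul]
    have hinj : Function.Injective φ := by
      rw [injective_iff_map_eq_zero]
      intro a ha
      have hval : a = ((a.val : ℕ) : ZMod 4) := (ZMod.natCast_rightInverse a).symm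
      rw [hval, hφval] at ha
      have hlt : a.val < 4 := a.val_lt
      interval_cases h : a.val
      · rw [hval]; exact Nat.cast_zero
      · exfalso; rw [one_nsmul] at ha; exact hv0 ha
      · exact absurd ha hv2
      · exfalso
        have h40 := h4 v
        rw [show (4:ℕ) • v = (3:ℕ) • v + v from by rw [← succ_nsmul], ha, zero_add] at h40
        exact hv0 h40
    have hbij : Function.Bijective φ :=
      (Fintype.bijective_iff_injective_and_card φ).mpr ⟨hinj, by simp [hH]⟩
    exact ⟨AddEquiv.ofBijective φ hbij⟩
  · right
    push_neg at hv
    haveI : Nontrivial H := Fintype.one_lt_card_iff_nontrivial.mp (by omega)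
    obtain ⟨u, hu⟩ := exists_ne (0 : H)
    have hex : ∃ w : H, w ∉ ({0, u} : Finset H) := by
      by_contra hcon
      push_neg at hcon
      have hsub : (Finset.univ : Finset H) ⊆ {0, u} := fun x _ => hcon x
      have hcard := Finset.card_le_card hsub
      have h2 : ({0, u} : Finset H).card ≤ 2 :=
        le_trans (Finset.card_insert_le _ _) (by simp)
      rw [Finset.card_univ, hH] at hcard
      omega
    obtain ⟨w, hw⟩ := hex
    simp only [Finset.mem_insert, Finset.mem_singleton, not_or] at hw
    obtain ⟨hw0, hwu⟩ := hw
    have h2u : (2 : ℕ) • u = 0 := hv u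
    have h2w : (2 : ℕ) • w = 0 := hv w
    have hzu : ((zmultiplesHom H) u) ((2 : ℕ) : ℤ) = 0 := by
      simp only [zmultiplesHom_apply, natCast_zsmul]; exact h2u
    have hzw : ((zmultiplesHom H) w) ((2 : ℕ) : ℤ) = 0 := by
      simp only [zmultiplesHom_apply, natCast_zsmul]; exact h2w
    set φu : ZMod 2 →+ H := ZMod.lift 2 ⟨(zmultiplesHom H) u, by exact_mod_cast hzu⟩
    set φw : ZMod 2 →+ H := ZMod.lift 2 ⟨(zmultiplesHom H) w, by exact_mod_cast hzw⟩
    set φ : ZMod 2 × ZMod 2 →+ H := φu.coprod φw with hφ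
    have hφuval : ∀ m : ℕ, φu ((m : ℕ) : ZMod 2) = m • u := by
      intro m
      have : ((m : ℕ) : ZMod 2) = ((m : ℤ) : ZMod 2) := by push_cast; rfl
      rw [this]
      show (ZMod.lift 2 _) _ = _
      rw [ZMod.lift_coe]
      simp [natCast_zsmul]
    have hφwval : ∀ m : ℕ, φw ((m : ℕ) : ZMod 2) = m • w := by
      intro m
      have : ((m : ℕ) : ZMod 2) = ((m : ℤ) : ZMod 2) := by push_cast; rfl
      rw [this]
      show (ZMod.lift 2 _) _ = _
      rw [ZMod.lift_coe]
      simp [natCast_zsmul]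
    have hinj : Function.Injective φ := by
      rw [injective_iff_map_eq_zero]
      rintro ⟨s, t⟩ hst
      have hsval : s = ((s.val : ℕ) : ZMod 2) := (ZMod.natCast_rightInverse s).symm
      have htval : t = ((t.val : ℕ) : ZMod 2) := (ZMod.natCast_rightInverse t).symm
      have hst' : s.val • u + t.val • w = 0 := by
        rw [← hφuval, ← hφwval, ← hsval, ← htval]
        exact hst
      have hslt : s.val < 2 := s.val_lt
      have htlt : t.val < 2 := t.val_lt
      have hs0 : s.val = 0 ∧ t.val = 0 := by
        interval_cases hs : s.val <;> interval_cases ht : t.val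
        · exact ⟨rfl, rfl⟩
        · exfalso; rw [zero_smul, zero_add, one_nsmul] at hst'; exact hw0 hst'
        · exfalso; rw [zero_smul, add_zero, one_nsmul] at hst'; exact hu hst'
        · exfalso
          rw [one_nsmul, one_nsmul] at hst'
          have h2u' : u + u = 0 := by rw [← two_nsmul]; exact h2u
          have h3 : u + w + u = 0 + u := by rw [hst']
          rw [zero_add] at h3
          have h4 : w + (u + u) = u := by
            calc w + (u + u) = u + w + u := by abel
              _ = u := h3
          rw [h2u', add_zero] at h4
          exact hwu h4
      rw [hsval, htval, hs0.1, hs0.2]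
      rfl
    have hbij : Function.Bijective φ :=
      (Fintype.bijective_iff_injective_and_card φ).mpr ⟨hinj, by simp [hH]⟩
    exact ⟨AddEquiv.ofBijective φ hbij⟩

theorem exists_zero_sum_magic_square_order4_component {H : Type*} [AddCommGroup H] [Fintype H]
    (hH : Fintype.card H = 4) (α : ℕ) (hα : 2 ≤ α) :
    ∃ A : Fin (2 ^ α) → Fin (2 ^ α) → H × ZMod (2 ^ (2 * α - 2)),
      IsZeroSumMagicSquare A := by
  rcases Nat.lt_or_ge α 3 with hα3 | hα3
  · have hα2 : α = 2 := by omega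
    subst hα2
    rcases MagicAux.classify hH with he | he
    · obtain ⟨e⟩ := he
      exact ⟨fun i j => (e.prodCongr (AddEquiv.refl (ZMod 4))) (MagicAux.M1 i j),
        MagicAux.map _ MagicAux.hM1⟩
    · obtain ⟨e⟩ := he
      exact ⟨fun i j => (e.prodCongr (AddEquiv.refl (ZMod 4))) (MagicAux.M2 i j),
        MagicAux.map _ MagicAux.hM2⟩
  · have h1 : (2:ℕ)^α = 2^(α-1) * 2 := by
      rw [← pow_succ]
      congr 1
      omega
    have h2 : (2:ℕ)^(2*α-2) = (2^(α-1))^2 := by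
      rw [← pow_mul]
      congr 1
      omega
    rw [h1, h2]
    refine MagicAux.main hH (2^(α-1)) (pow_pos (by norm_num) _) ?_
    have h4 : (4:ℕ) = 2^2 := rfl
    rw [h4]
    exact pow_dvd_pow 2 (by omega)
end

section
/- Let α ≥ 2 and let k ∈ {1,…,2^{2α}−1} with k ≢ 0 (mod 4). Then in Z_2 ⊕ Z_{2^{2α+1}}, the 2×2 block B_k with rows ((0,k),(0,−k)) and ((1,−k),(1,k)) has both row sums equal to (0,0), both column sums equal to (1,0), main diagonal sum (1,2k), and antidiagonal sum (1,−2k); moreover, the four entries of B_k are pairwise distinct, and the union of the entry sets of all such blocks B_k over 1 ≤ k ≤ 2^{2α}−1, k ≢ 0 (mod 4), is exactly the set {(a,b) ∈ Z_2 ⊕ Z_{2^{2α+1}} : b ≢ 0 (mod 4)}. -/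
lemma neg_natCast_eq (N m : ℕ) (hm : m ≤ N) :
    -(m : ZMod N) = ((N - m : ℕ) : ZMod N) := by
  have h : ((N - m : ℕ) : ZMod N) + (m : ZMod N) = 0 := by
    rw [← Nat.cast_add, Nat.sub_add_cancel hm, ZMod.natCast_self]
  exact neg_eq_of_add_eq_zero_left h

theorem block_Bk_properties (α : ℕ) (hα : 2 ≤ α) :
    (∀ k : ℕ, 1 ≤ k → k ≤ 2 ^ (2 * α) - 1 → ¬ (4 ∣ k) →
      ((((0 : ZMod 2), (k : ZMod (2 ^ (2 * α + 1)))) +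
          ((0 : ZMod 2), -(k : ZMod (2 ^ (2 * α + 1)))) = (0, 0)) ∧
       (((1 : ZMod 2), -(k : ZMod (2 ^ (2 * α + 1)))) +
          ((1 : ZMod 2), (k : ZMod (2 ^ (2 * α + 1)))) = (0, 0)) ∧
       (((0 : ZMod 2), (k : ZMod (2 ^ (2 * α + 1)))) +
          ((1 : ZMod 2), -(k : ZMod (2 ^ (2 * α + 1)))) = (1, 0)) ∧
       (((0 : ZMod 2), -(k : ZMod (2 ^ (2 * α + 1)))) +
          ((1 : ZMod 2), (k : ZMod (2 ^ (2 * α + 1)))) = (1, 0)) ∧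
       (((0 : ZMod 2), (k : ZMod (2 ^ (2 * α + 1)))) +
          ((1 : ZMod 2), (k : ZMod (2 ^ (2 * α + 1)))) = (1, 2 * (k : ZMod (2 ^ (2 * α + 1))))) ∧
       (((0 : ZMod 2), -(k : ZMod (2 ^ (2 * α + 1)))) +
          ((1 : ZMod 2), -(k : ZMod (2 ^ (2 * α + 1)))) = (1, -(2 * (k : ZMod (2 ^ (2 * α + 1)))))) ∧
       ([((0 : ZMod 2), (k : ZMod (2 ^ (2 * α + 1)))),
         ((0 : ZMod 2), -(k : ZMod (2 ^ (2 * α + 1)))),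
         ((1 : ZMod 2), -(k : ZMod (2 ^ (2 * α + 1)))),
         ((1 : ZMod 2), (k : ZMod (2 ^ (2 * α + 1))))] :
           List (ZMod 2 × ZMod (2 ^ (2 * α + 1)))).Nodup)) ∧
    (∀ p : ZMod 2 × ZMod (2 ^ (2 * α + 1)),
      (∃ k : ℕ, 1 ≤ k ∧ k ≤ 2 ^ (2 * α) - 1 ∧ ¬ (4 ∣ k) ∧
        p ∈ ({((0 : ZMod 2), (k : ZMod (2 ^ (2 * α + 1)))),
              ((0 : ZMod 2), -(k : ZMod (2 ^ (2 * α + 1)))),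
              ((1 : ZMod 2), -(k : ZMod (2 ^ (2 * α + 1)))),
              ((1 : ZMod 2), (k : ZMod (2 ^ (2 * α + 1))))} :
            Set (ZMod 2 × ZMod (2 ^ (2 * α + 1))))) ↔
        ¬ (4 ∣ (p.2.val))) := by
  set N := 2 ^ (2 * α + 1) with hNdef
  have hNpos : 0 < N := Nat.pow_pos (by norm_num)
  haveI : NeZero N := ⟨hNpos.ne'⟩
  have hhalf : N = 2 * 2 ^ (2 * α) := by rw [hNdef, pow_succ, mul_comm]
  have hMpos : 0 < 2 ^ (2 * α) := Nat.pow_pos (by norm_num)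
  have h4N : 4 ∣ N := by
    rw [hNdef]
    have : (4 : ℕ) = 2 ^ 2 := by norm_num
    rw [this]
    exact pow_dvd_pow 2 (by omega)
  have h4M : 4 ∣ 2 ^ (2 * α) := by
    have : (4 : ℕ) = 2 ^ 2 := by norm_num
    rw [this]
    exact pow_dvd_pow 2 (by omega)
  have hval : ∀ m : ℕ, m < N → ((m : ZMod N)).val = m := fun m hm =>
    ZMod.val_natCast_of_lt hm
  constructor
  · intro k hk1 hk2 hk4
    have hkN : k < N := by omega
    have hkM : k < 2 ^ (2 * α) := by omega
    have hne : (k : ZMod N) ≠ -(k : ZMod N) := by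
      intro h
      have h2 : ((2 * k : ℕ) : ZMod N) = 0 := by
        push_cast
        rw [two_mul]
        nth_rewrite 2 [h]
        ring
      rw [ZMod.natCast_eq_zero_iff] at h2
      have := Nat.le_of_dvd (by omega) h2
      omega
    refine ⟨?_, ?_, ?_, ?_, ?_, ?_, ?_⟩
    · ext <;> simp
    · refine Prod.ext ?_ ?_ <;> simp
      decide
    · refine Prod.ext ?_ ?_ <;> simp
    · refine Prod.ext ?_ ?_ <;> simp
    · simp only [Prod.mk_add_mk, Prod.mk.injEq]
      exact ⟨by simp, by rw [two_mul]⟩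
    · simp only [Prod.mk_add_mk, Prod.mk.injEq]
      exact ⟨by simp, by rw [two_mul]; ring⟩
    · have h01 : ((0 : ZMod 2)) ≠ 1 := by decide
      refine List.nodup_cons.mpr ⟨?_, List.nodup_cons.mpr ⟨?_, List.nodup_cons.mpr
        ⟨?_, List.nodup_singleton _⟩⟩⟩
      · simp only [List.mem_cons, List.not_mem_nil, or_false]
        push_neg
        exact ⟨fun h => hne (congrArg Prod.snd h), fun h => h01 (congrArg Prod.fst h),
          fun h => h01 (congrArg Prod.fst h)⟩
      · simp only [List.mem_cons, List.not_mem_nil, or_false]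
        push_neg
        exact ⟨fun h => h01 (congrArg Prod.fst h), fun h => h01 (congrArg Prod.fst h)⟩
      · simp only [List.mem_cons, List.not_mem_nil, or_false]
        exact fun h => hne (congrArg Prod.snd h).symm
  · intro p
    constructor
    · rintro ⟨k, hk1, hk2, hk4, hp⟩
      have hkN : k < N := by omega
      have hvneg : (-(k : ZMod N)).val = N - k := by
        rw [neg_natCast_eq N k (by omega), hval _ (by omega)]
      have hvk : ((k : ZMod N)).val = k := hval k hkN
      have h4neg : ¬ (4 ∣ N - k) := by
        intro h
        obtain ⟨c, hc⟩ := h4N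
        obtain ⟨d, hd⟩ := h
        exact hk4 ⟨c - d, by omega⟩
      simp only [Set.mem_insert_iff, Set.mem_singleton_iff] at hp
      rcases hp with h | h | h | h <;>
        · rw [h]
          simp only [hvk, hvneg]
          first | exact hk4 | exact h4neg
    · intro h4p
      set v := p.2.val with hv
      have hvN : v < N := ZMod.val_lt p.2
      have hv0 : v ≠ 0 := by rintro h; exact h4p (h ▸ dvd_zero 4)
      have hp2 : p.2 = (v : ZMod N) := (ZMod.natCast_rightInverse p.2).symm
      have ha : p.1 = 0 ∨ p.1 = 1 := by
        have : ∀ a : ZMod 2, a = 0 ∨ a = 1 := by decide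
        exact this p.1
      have hvM : v ≠ 2 ^ (2 * α) := by
        intro h
        exact h4p (h ▸ h4M)
      by_cases hcase : v ≤ 2 ^ (2 * α) - 1
      · refine ⟨v, by omega, hcase, h4p, ?_⟩
        simp only [Set.mem_insert_iff, Set.mem_singleton_iff]
        rcases ha with h0 | h1
        · left; rw [← hp2, ← h0]
        · right; right; right; rw [← hp2, ← h1]
      · have hvbig : 2 ^ (2 * α) + 1 ≤ v := by omega
        refine ⟨N - v, by omega, by omega, ?_, ?_⟩
        · intro h
          obtain ⟨c, hc⟩ := h4N
          obtain ⟨d, hd⟩ := h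
          exact h4p ⟨c - d, by omega⟩
        · have hneg : -((N - v : ℕ) : ZMod N) = (v : ZMod N) := by
            rw [neg_natCast_eq N _ (by omega)]
            congr 1
            omega
          simp only [Set.mem_insert_iff, Set.mem_singleton_iff]
          rcases ha with h0 | h1
          · right; left; rw [hneg, ← hp2, ← h0]
          · right; right; left; rw [hneg, ← hp2, ← h1]
end
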